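/- arXiv:1810.06354 — 5 statements merged into one kernel-verified Lean document; each statement's English description precedes it below -/
import Mathlib

section
/- For every integer m ≥ 2, the independence number of the double vertex graph of the fan graph F_{m,1} equals ⌊m²/4⌋. -/
/-- The independence number of a graph: the supremum of sizes of independent sets. -/
noncomputable def indepNum {V : Type*} (G : SimpleGraph V) : ℕ :=
  sSup {n | ∃ s : Finset V, s.card = n ∧ ∀ a ∈ s, ∀ b ∈ s, ¬ G.Adj a b}

/-- The path graph on `n` vertices `0, 1, ..., n-1`. -/
def pathG (n : ℕ) : SimpleGraph (Fin n) :=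
  SimpleGraph.fromRel (fun i j => (i : ℕ) + 1 = (j : ℕ))

/-- The cycle graph on `n` vertices `0, 1, ..., n-1`. -/
def cycleG (n : ℕ) : SimpleGraph (Fin n) :=
  SimpleGraph.fromRel (fun i j => (i : ℕ) + 1 = (j : ℕ) ∨ ((i : ℕ) = 0 ∧ (j : ℕ) = n - 1))

/-- The join of a graph `G` with a single extra vertex. -/
def joinK1 {V : Type*} (G : SimpleGraph V) : SimpleGraph (V ⊕ Unit) :=
  SimpleGraph.fromRel (fun a b =>
    (∃ x y, G.Adj x y ∧ a = Sum.inl x ∧ b = Sum.inl y) ∨ (a.isLeft ∧ b.isRight))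

/-- The fan graph `F_{m,1} = P_m + K_1`. -/
def fanG (m : ℕ) : SimpleGraph (Fin m ⊕ Unit) := joinK1 (pathG m)

/-- The wheel graph `W_{m,1} = C_m + K_1`. -/
def wheelG (m : ℕ) : SimpleGraph (Fin m ⊕ Unit) := joinK1 (cycleG m)

/-- The `k`-token graph: vertices are `k`-subsets of `V(G)`, two subsets adjacent
whenever their symmetric difference is an edge of `G`. -/
def tokenGraph {V : Type*} [DecidableEq V] (k : ℕ) (G : SimpleGraph V) :
    SimpleGraph {A : Finset V // A.card = k} :=
  SimpleGraph.fromRel (fun A B => ∃ a b : V, G.Adj a b ∧ symmDiff A.1 B.1 = {a, b})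

/-- The double vertex graph `G^(2)`: the `2`-token graph of `G`. -/
def doubleVertexGraph {V : Type*} [DecidableEq V] (G : SimpleGraph V) :
    SimpleGraph {A : Finset V // A.card = 2} :=
  tokenGraph 2 G

/-- The pair graph (complete double vertex graph) `C(G)`: vertices are the 2-multisets
of `V(G)`; `{a,x}` and `{a,y}` (distinct) are adjacent iff `x` and `y` are adjacent in `G`. -/
def pairGraph {V : Type*} (G : SimpleGraph V) : SimpleGraph (Sym2 V) :=
  SimpleGraph.fromRel (fun s t => ∃ a x y : V, G.Adj x y ∧ s = Sym2.mk a x ∧ t = Sym2.mk a y)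

/-!
Let `v` be the last path vertex of `F_{m+1}`; deleting it leaves `F_m`. In an independent set of
`F_{m+1}^(2)`, the pairs avoiding `v` form an independent set of `F_m^(2)`, while two pairs
`{v, w}`, `{v, w'}` are adjacent exactly when `w ~ w'`, so the pairs through `v` form an
independent set of `F_m`, of size at most `⌈m/2⌉`. Since `⌊m²/4⌋ + ⌈m/2⌉ = ⌊(m+1)²/4⌋`, induction
from `F_2^(2) = K_3` gives the upper bound. For the lower bound colour the path by parity: two
pairs `{x, a}`, `{x, b}` with `a ~ b` cannot both be bichromatic, so the
`⌈m/2⌉ ⌊m/2⌋ = ⌊m²/4⌋` bichromatic pairs of path vertices are independent.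
-/

open Finset
open scoped symmDiff

theorem Nat.sq_div_four_eq_mul (m : ℕ) : m ^ 2 / 4 = (m + 1) / 2 * (m / 2) := by
  rcases Nat.even_or_odd' m with ⟨k, rfl | rfl⟩
  · rw [show (2 * k) ^ 2 = 4 * (k * k) by ring, show (2 * k + 1) / 2 = k by omega,
      show 2 * k / 2 = k by omega, Nat.mul_div_cancel_left _ (by norm_num)]
  · rw [show (2 * k + 1) ^ 2 = 4 * (k * k + k) + 1 by ring,
      show (2 * k + 1 + 1) / 2 = k + 1 by omega, show (2 * k + 1) / 2 = k by omega,
      show (k + 1) * k = k * k + k by ring]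
    omega

theorem Nat.add_one_sq_div_four (m : ℕ) : (m + 1) ^ 2 / 4 = m ^ 2 / 4 + (m + 1) / 2 := by
  rw [Nat.sq_div_four_eq_mul, Nat.sq_div_four_eq_mul, show (m + 1 + 1) / 2 = m / 2 + 1 by omega]
  ring

variable {V W : Type*}

theorem indepNum_eq_simpleGraph_indepNum (G : SimpleGraph V) : indepNum G = G.indepNum := by
  unfold indepNum SimpleGraph.indepNum
  congr 1
  ext n
  simp only [Set.mem_ofPred_eq, SimpleGraph.isNIndepSet_iff, SimpleGraph.isIndepSet_iff,
    Set.Pairwise, mem_coe]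
  exact exists_congr fun s => ⟨fun ⟨hn, h⟩ => ⟨fun a ha b hb _ => h a ha b hb, hn⟩,
    fun ⟨h, hn⟩ => ⟨hn, fun a ha b hb hab => h ha hb hab.ne hab⟩⟩

theorem Finset.exists_eq_pair_of_card_symmDiff [DecidableEq V] {A B : Finset V} (hA : #A = 2)
    (hB : #B = 2) (hAB : #(A ∆ B) = 2) :
    ∃ x a b, x ≠ a ∧ x ≠ b ∧ A = {x, a} ∧ B = {x, b} ∧ A ∆ B = {a, b} := by
  have hsymm : A ∆ B = A \ B ∪ B \ A := symmDiff_def A B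
  have hsdiff : #(A \ B) + #(B \ A) = 2 := by
    rw [← hAB, hsymm, card_union_of_disjoint disjoint_sdiff_sdiff]
  have hA' := card_sdiff_add_card_inter A B
  have hB' := card_sdiff_add_card_inter B A
  rw [inter_comm] at hB'
  obtain ⟨a, ha⟩ := card_eq_one.1 (by omega : #(A \ B) = 1)
  obtain ⟨b, hb⟩ := card_eq_one.1 (by omega : #(B \ A) = 1)
  obtain ⟨x, hx⟩ := card_eq_one.1 (by omega : #(A ∩ B) = 1)
  have hxA : x ∈ A := mem_of_mem_inter_left (hx ▸ mem_singleton_self x)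
  have hxB : x ∈ B := mem_of_mem_inter_right (hx ▸ mem_singleton_self x)
  have haB : a ∉ B := (mem_sdiff.1 (ha ▸ mem_singleton_self a)).2
  have hbA : b ∉ A := (mem_sdiff.1 (hb ▸ mem_singleton_self b)).2
  refine ⟨x, a, b, fun h => haB (h ▸ hxB), fun h => hbA (h ▸ hxA), ?_, ?_, ?_⟩
  · rw [← sdiff_union_inter A B, ha, hx, pair_comm]; rfl
  · rw [← sdiff_union_inter B A, hb, inter_comm, hx, pair_comm]; rfl
  · rw [hsymm, ha, hb]; rfl

namespace SimpleGraph

variable {G : SimpleGraph V} {H : SimpleGraph W}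

theorem indepNum_le_one_of_forall_adj (h : ∀ a b, a ≠ b → G.Adj a b) : G.indepNum ≤ 1 := by
  obtain ⟨s, hs, hcard⟩ := G.exists_isNIndepSet_indepNum
  rw [← hcard, card_le_one]
  intro a ha b hb
  by_contra hab
  exact hs ha hb hab (h a b hab)

theorem Embedding.card_le_indepNum [Finite W] (f : H ↪g G) {s : Finset V}
    (hs : G.IsIndepSet s) (hsf : ↑s ⊆ Set.range f) : #s ≤ H.indepNum := by
  classical
  rw [← Set.image_univ, subset_set_image_iff] at hsf
  obtain ⟨t, -, rfl⟩ := hsf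
  rw [card_image_of_injective _ f.injective]
  refine IsIndepSet.card_le_indepNum fun a ha b hb hab hadj => ?_
  exact hs (mem_image_of_mem f ha) (mem_image_of_mem f hb) (f.injective.ne hab)
    (f.map_adj_iff.2 hadj)

theorem Embedding.indepNum_le [Finite V] (f : H ↪g G) : H.indepNum ≤ G.indepNum := by
  classical
  obtain ⟨t, ht, hcard⟩ := H.exists_isNIndepSet_indepNum
  rw [← hcard, ← card_image_of_injective t f.injective]
  refine IsIndepSet.card_le_indepNum ?_
  rintro _ hfa _ hfb hne hadj
  obtain ⟨a, ha, rfl⟩ := mem_image.1 hfa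
  obtain ⟨b, hb, rfl⟩ := mem_image.1 hfb
  exact ht ha hb (fun h => hne (congrArg f h)) (f.map_adj_iff.1 hadj)

section JoinK1

theorem joinK1_adj_inl_inl {x y : V} : (joinK1 G).Adj (.inl x) (.inl y) ↔ G.Adj x y := by
  simp only [joinK1, fromRel_adj, ne_eq, Sum.inl.injEq, Sum.isLeft_inl, Sum.isRight_inl]
  constructor
  · rintro ⟨-, (⟨x', y', h, rfl, rfl⟩ | h) | (⟨x', y', h, rfl, rfl⟩ | h)⟩
    · exact h
    · simp at h
    · exact h.symm
    · simp at h
  · exact fun h => ⟨h.ne, Or.inl (Or.inl ⟨x, y, h, rfl, rfl⟩)⟩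

theorem joinK1_adj_inl_inr (x : V) (u : Unit) : (joinK1 G).Adj (.inl x) (.inr u) := by
  simp [joinK1]

def joinK1Inl (G : SimpleGraph V) : G ↪g joinK1 G where
  toEmbedding := .inl
  map_rel_iff' := joinK1_adj_inl_inl

def Embedding.joinK1Map (f : H ↪g G) : joinK1 H ↪g joinK1 G where
  toEmbedding := .sumMap f.toEmbedding (.refl Unit)
  map_rel_iff' {a b} := by
    rcases a with x | u <;> rcases b with y | w
    · exact joinK1_adj_inl_inl.trans (f.map_adj_iff.trans joinK1_adj_inl_inl.symm)
    · exact iff_of_true (joinK1_adj_inl_inr _ _) (joinK1_adj_inl_inr _ _)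
    · exact iff_of_true (joinK1_adj_inl_inr _ _).symm (joinK1_adj_inl_inr _ _).symm
    · exact iff_of_false (fun h => h.ne rfl) (fun h => h.ne rfl)

theorem indepNum_joinK1_le [Finite V] : (joinK1 G).indepNum ≤ max 1 G.indepNum := by
  obtain ⟨s, hs, hcard⟩ := (joinK1 G).exists_isNIndepSet_indepNum
  rw [← hcard]
  by_cases hhub : Sum.inr () ∈ s
  · have hub (a) (ha : a ∈ s) : a = .inr () := by
      rcases a with x | u
      · exact absurd (joinK1_adj_inl_inr x ()) (hs ha hhub (by simp))
      · rfl
    exact le_max_of_le_left (card_le_one.2 fun a ha b hb => by rw [hub a ha, hub b hb])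
  · refine le_max_of_le_right ((joinK1Inl G).card_le_indepNum hs fun a ha => ?_)
    rcases a with x | u
    · exact ⟨x, rfl⟩
    · exact absurd ha hhub

end JoinK1

section Path

theorem pathG_eq_pathGraph (n : ℕ) : pathG n = pathGraph n := by
  ext i j
  simp only [pathG, fromRel_adj, pathGraph_adj, ne_eq, Fin.ext_iff]
  omega

theorem fanG_eq_joinK1_pathGraph (m : ℕ) : fanG m = joinK1 (pathGraph m) := by
  rw [fanG, pathG_eq_pathGraph]

def pathGraphCastSucc (n : ℕ) : pathGraph n ↪g pathGraph (n + 1) where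
  toEmbedding := Fin.castSuccEmb
  map_rel_iff' := by simp [pathGraph_adj]

theorem range_joinK1Map_pathGraphCastSucc (n : ℕ) :
    Set.range (pathGraphCastSucc n).joinK1Map = {.inl (Fin.last n)}ᶜ := by
  ext (i | u)
  · simp [Embedding.joinK1Map, pathGraphCastSucc, Fin.exists_castSucc_eq]
  · simp [Embedding.joinK1Map]

theorem indepNum_pathGraph_le (n : ℕ) : (pathGraph n).indepNum ≤ (n + 1) / 2 := by
  obtain ⟨s, hs, hcard⟩ := (pathGraph n).exists_isNIndepSet_indepNum
  rw [← hcard, ← card_range ((n + 1) / 2)]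
  refine card_le_card_of_injOn (fun i => i.val / 2) (fun i _ => ?_) (fun i hi j hj hij => ?_)
  · simp only [coe_range, Set.mem_Iio]
    omega
  · by_contra hne
    refine hs hi hj hne (pathGraph_adj.2 ?_)
    simp only [Fin.ext_iff] at hne hij
    omega

theorem card_pathGraph_bicoloring_true (n : ℕ) :
    #{u | pathGraph.bicoloring n u = true} = (n + 1) / 2 := by
  simp only [pathGraph.bicoloring, Coloring.mk, RelHom.coeFn_mk, decide_eq_true_eq]
  induction n with
  | zero => rfl
  | succ n ih =>
    rw [card_filter, Fin.sum_univ_castSucc, ← card_filter]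
    simp only [Fin.val_castSucc, ih, Fin.val_last]
    split_ifs <;> omega

theorem card_pathGraph_bicoloring_false (n : ℕ) :
    #{u | pathGraph.bicoloring n u = false} = n / 2 := by
  have := card_filter_add_card_filter_not (s := univ) (pathGraph.bicoloring n · = true)
  simp only [Bool.not_eq_true, card_univ, Fintype.card_fin, card_pathGraph_bicoloring_true] at this
  omega

end Path

section DoubleVertexGraph

variable [DecidableEq V] [DecidableEq W]

def pairVertex {a b : V} (h : a ≠ b) : {A : Finset V // #A = 2} := ⟨{a, b}, card_pair h⟩

theorem doubleVertexGraph_adj_iff {A B : {A : Finset V // #A = 2}} :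
    (doubleVertexGraph G).Adj A B ↔
      ∃ x a b, x ≠ a ∧ x ≠ b ∧ G.Adj a b ∧ A.1 = {x, a} ∧ B.1 = {x, b} := by
  rw [doubleVertexGraph, tokenGraph, fromRel_adj]
  constructor
  · rintro ⟨-, hsd⟩
    obtain ⟨a, b, hab, hsd⟩ : ∃ a b, G.Adj a b ∧ A.1 ∆ B.1 = {a, b} := by
      rcases hsd with ⟨a, b, hab, hsd⟩ | ⟨a, b, hab, hsd⟩
      · exact ⟨a, b, hab, hsd⟩
      · exact ⟨b, a, hab.symm, by rw [symmDiff_comm, hsd, pair_comm]⟩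
    obtain ⟨x, a', b', hxa, hxb, hA, hB, hsd'⟩ :=
      exists_eq_pair_of_card_symmDiff A.2 B.2 (by rw [hsd, card_pair hab.ne])
    rw [hsd, ← coe_inj, coe_pair, coe_pair, Set.pair_eq_pair_iff] at hsd'
    refine ⟨x, a', b', hxa, hxb, ?_, hA, hB⟩
    rcases hsd' with ⟨rfl, rfl⟩ | ⟨rfl, rfl⟩
    exacts [hab, hab.symm]
  · rintro ⟨x, a, b, hxa, hxb, hab, hA, hB⟩
    refine ⟨fun h => ?_, Or.inl ⟨a, b, hab, ?_⟩⟩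
    · have : a ∈ B.1 := h ▸ hA ▸ mem_insert_of_mem (mem_singleton_self a)
      rw [hB, mem_insert, mem_singleton] at this
      exact this.elim (fun h => hxa h.symm) hab.ne
    · rw [hA, hB]
      ext v
      have := hab.ne
      simp only [mem_symmDiff, mem_insert, mem_singleton]
      grind

theorem pairVertex_adj_pairVertex_iff {x a b : V} (ha : x ≠ a) (hb : x ≠ b) :
    (doubleVertexGraph G).Adj (pairVertex ha) (pairVertex hb) ↔ G.Adj a b := by
  refine ⟨fun h => ?_, fun h => doubleVertexGraph_adj_iff.2 ⟨x, a, b, ha, hb, h, rfl, rfl⟩⟩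
  obtain ⟨y, a', b', hya, hyb, hadj, hA, hB⟩ := doubleVertexGraph_adj_iff.1 h
  simp only [pairVertex, ← coe_inj, coe_pair, Set.pair_eq_pair_iff] at hA hB
  grind [hadj.ne]

theorem isIndepSet_doubleVertexGraph_bichromatic (c : G.Coloring Bool) :
    (doubleVertexGraph G).IsIndepSet {A | ∀ x ∈ A.1, ∀ y ∈ A.1, x ≠ y → c x ≠ c y} := by
  intro A hA B hB _ hadj
  obtain ⟨x, a, b, hxa, hxb, hab, hA', hB'⟩ := doubleVertexGraph_adj_iff.1 hadj
  have hca := hA x (by simp [hA']) a (by simp [hA']) hxa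
  have hcb := hB x (by simp [hB']) b (by simp [hB']) hxb
  have := c.valid hab
  revert hca hcb this
  cases c x <;> cases c a <;> cases c b <;> decide

theorem card_mul_card_le_indepNum_doubleVertexGraph [Fintype V] (c : G.Coloring Bool) :
    #{v | c v = true} * #{v | c v = false} ≤ (doubleVertexGraph G).indepNum := by
  set T : Finset V := {v | c v = true}
  set F : Finset V := {v | c v = false}
  have hne {p : V × V} (hp : p ∈ T ×ˢ F) : p.1 ≠ p.2 := by
    simp only [T, F, mem_product, mem_filter, mem_univ, true_and] at hp
    exact fun h => by simp [h, hp.2] at hp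
  let pair (p : T ×ˢ F) : {A : Finset V // #A = 2} := pairVertex (hne p.2)
  rw [← card_product, ← card_attach]
  calc #(T ×ˢ F).attach ≤ #({A | ∀ x ∈ A.1, ∀ y ∈ A.1, x ≠ y → c x ≠ c y} : Finset _) := by
        refine card_le_card_of_injOn pair (fun p _ => ?_) (fun p _ q _ h => ?_)
        · obtain ⟨⟨a, b⟩, hp⟩ := p
          simp only [T, F, mem_product, mem_filter, mem_univ, true_and] at hp
          simp only [mem_coe, mem_filter, mem_univ, true_and, pair, pairVertex, mem_insert,
            mem_singleton]
          rintro x (rfl | rfl) y (rfl | rfl) hxy <;> simp_all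
        · obtain ⟨⟨a, b⟩, hp⟩ := p
          obtain ⟨⟨a', b'⟩, hq⟩ := q
          simp only [T, F, mem_product, mem_filter, mem_univ, true_and] at hp hq
          have h' : ({a, b} : Set V) = {a', b'} := by
            simpa [pair, pairVertex, ← coe_inj] using congrArg Subtype.val h
          rw [Set.pair_eq_pair_iff] at h'
          rcases h' with ⟨rfl, rfl⟩ | ⟨rfl, rfl⟩
          · rfl
          · simp_all
    _ ≤ _ := IsIndepSet.card_le_indepNum (by simpa using isIndepSet_doubleVertexGraph_bichromatic c)

theorem Embedding.exists_adj_map_eq_pair_iff (f : H ↪g G) (S : Finset W) :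
    (∃ a b, G.Adj a b ∧ S.map f.toEmbedding = {a, b}) ↔ ∃ a b, H.Adj a b ∧ S = {a, b} := by
  constructor
  · rintro ⟨a, b, hab, hS⟩
    have ha : a ∈ S.map f.toEmbedding := hS ▸ mem_insert_self a {b}
    have hb : b ∈ S.map f.toEmbedding := hS ▸ mem_insert_of_mem (mem_singleton_self b)
    obtain ⟨a, -, rfl⟩ := mem_map.1 ha
    obtain ⟨b, -, rfl⟩ := mem_map.1 hb
    refine ⟨a, b, f.map_adj_iff.1 hab, Finset.map_injective f.toEmbedding ?_⟩
    rw [hS, Finset.map_insert, Finset.map_singleton]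
  · rintro ⟨a, b, hab, rfl⟩
    exact ⟨f a, f b, f.map_adj_iff.2 hab, by rw [Finset.map_insert, Finset.map_singleton]; rfl⟩

def Embedding.doubleVertexGraphMap (f : H ↪g G) : doubleVertexGraph H ↪g doubleVertexGraph G where
  toFun A := ⟨A.1.map f.toEmbedding, by rw [card_map, A.2]⟩
  inj' A B h := Subtype.ext (Finset.map_inj.1 (congrArg Subtype.val h))
  map_rel_iff' {A B} := by
    change (doubleVertexGraph G).Adj ⟨_, _⟩ ⟨_, _⟩ ↔ _
    have hsd (S T : Finset W) :
        S.map f.toEmbedding ∆ T.map f.toEmbedding = (S ∆ T).map f.toEmbedding := by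
      rw [map_eq_image, map_eq_image, map_eq_image, image_symmDiff _ _ f.toEmbedding.injective]
    simp only [doubleVertexGraph, tokenGraph, fromRel_adj, ne_eq, Subtype.ext_iff,
      Finset.map_inj, hsd, f.exists_adj_map_eq_pair_iff]

def Embedding.doubleVertexGraphLink (f : H ↪g G) {v : V} (hv : ∀ u, v ≠ f u) :
    H ↪g doubleVertexGraph G where
  toFun u := pairVertex (hv u)
  inj' u w h := by
    have hpair : ({v, f u} : Finset V) = {v, f w} := congrArg Subtype.val h
    have : f u ∈ ({v, f w} : Finset V) := hpair ▸ mem_insert_of_mem (mem_singleton_self _)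
    rw [mem_insert, mem_singleton] at this
    exact f.injective (this.resolve_left (hv u).symm)
  map_rel_iff' {a b} := by
    change (doubleVertexGraph G).Adj (pairVertex (hv a)) (pairVertex (hv b)) ↔ _
    exact (pairVertex_adj_pairVertex_iff _ _).trans f.map_adj_iff

theorem indepNum_doubleVertexGraph_le_add [Finite V] [Finite W] (f : H ↪g G) {v : V}
    (hf : Set.range f = {v}ᶜ) :
    (doubleVertexGraph G).indepNum ≤ (doubleVertexGraph H).indepNum + H.indepNum := by
  obtain ⟨s, hs, hcard⟩ := (doubleVertexGraph G).exists_isNIndepSet_indepNum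
  have hv (u : W) : v ≠ f u := by
    have : f u ∈ ({v}ᶜ : Set V) := hf ▸ Set.mem_range_self u
    exact fun h => this h.symm
  rw [← hcard, ← card_filter_add_card_filter_not (fun A => v ∉ A.1)]
  refine add_le_add (f.doubleVertexGraphMap.card_le_indepNum (hs.mono (filter_subset _ _)) ?_)
    ((f.doubleVertexGraphLink hv).card_le_indepNum (hs.mono (filter_subset _ _)) ?_)
  · intro A hA
    have hAf : ↑A.1 ⊆ f '' Set.univ := fun w hw => by
      rw [Set.image_univ, hf]
      exact fun h => (mem_filter.1 hA).2 (h ▸ hw)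
    obtain ⟨B, -, hB⟩ := subset_set_image_iff.1 hAf
    refine ⟨⟨B, ?_⟩, Subtype.ext ?_⟩
    · rw [← card_image_of_injective B f.injective, hB, A.2]
    · change B.map f.toEmbedding = A.1
      rw [map_eq_image, ← hB]
      rfl
  · intro A hA
    have hvA : v ∈ A.1 := not_not.1 (mem_filter.1 hA).2
    obtain ⟨w, hwA, hwv⟩ := exists_mem_ne (by rw [A.2]; norm_num) v
    obtain ⟨u, rfl⟩ : w ∈ Set.range f := hf ▸ hwv
    refine ⟨u, Subtype.ext (eq_of_subset_of_card_le ?_ ?_)⟩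
    · exact insert_subset_iff.2 ⟨hvA, singleton_subset_iff.2 hwA⟩
    · rw [A.2, ((f.doubleVertexGraphLink hv) u).2]

end DoubleVertexGraph

instance (n : ℕ) : DecidableRel (pathG n).Adj :=
  fun _ _ => decidable_of_iff' _ (fromRel_adj _ _ _)

instance [Fintype V] [DecidableEq V] [DecidableRel G.Adj] : DecidableRel (joinK1 G).Adj :=
  fun _ _ => decidable_of_iff' _ (fromRel_adj _ _ _)

instance [Fintype V] [DecidableEq V] [DecidableRel G.Adj] :
    DecidableRel (doubleVertexGraph G).Adj :=
  fun _ _ => decidable_of_iff' _ (fromRel_adj _ _ _)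

theorem indepNum_doubleVertexGraph_fanG_le {m : ℕ} (hm : 2 ≤ m) :
    (doubleVertexGraph (fanG m)).indepNum ≤ m ^ 2 / 4 := by
  induction m, hm using Nat.le_induction with
  | base =>
    -- `F_2` is a triangle and so is its double vertex graph; the recursion from `F_1` only gives 2.
    exact indepNum_le_one_of_forall_adj (by unfold fanG; decide)
  | succ m hm ih =>
    rw [fanG_eq_joinK1_pathGraph] at ih ⊢
    calc _ ≤ (doubleVertexGraph (joinK1 (pathGraph m))).indepNum
            + (joinK1 (pathGraph m)).indepNum :=
          indepNum_doubleVertexGraph_le_add _ (range_joinK1Map_pathGraphCastSucc m)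
      _ ≤ m ^ 2 / 4 + (m + 1) / 2 :=
          add_le_add ih (indepNum_joinK1_le.trans (max_le (by omega) (indepNum_pathGraph_le m)))
      _ = (m + 1) ^ 2 / 4 := (Nat.add_one_sq_div_four m).symm

theorem sq_div_four_le_indepNum_doubleVertexGraph_pathGraph (n : ℕ) :
    n ^ 2 / 4 ≤ (doubleVertexGraph (pathGraph n)).indepNum := by
  have := card_mul_card_le_indepNum_doubleVertexGraph (pathGraph.bicoloring n)
  rwa [card_pathGraph_bicoloring_true, card_pathGraph_bicoloring_false,
    ← Nat.sq_div_four_eq_mul] at this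

end SimpleGraph

/-- For every integer `m ≥ 2`, the independence number of the double vertex graph of
the fan graph `F_{m,1}` equals `⌊m²/4⌋`. -/
theorem indepNum_doubleVertexGraph_fan (m : ℕ) (hm : 2 ≤ m) :
    indepNum (doubleVertexGraph (fanG m)) = m ^ 2 / 4 := by
  rw [indepNum_eq_simpleGraph_indepNum]
  refine le_antisymm (SimpleGraph.indepNum_doubleVertexGraph_fanG_le hm) ?_
  rw [SimpleGraph.fanG_eq_joinK1_pathGraph]
  exact (SimpleGraph.sq_div_four_le_indepNum_doubleVertexGraph_pathGraph m).trans
    (SimpleGraph.joinK1Inl _).doubleVertexGraphMap.indepNum_le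
end

section
/- For every integer m ≥ 4, the independence number of the double vertex graph of the wheel graph W_{m,1} equals ⌊(m/2)·⌊m/2⌋⌋. -/
/-!
Present every pair of vertices of `W_m` as `{x, x + c}` with `0 ≤ c ≤ ⌊m/2⌋`, where `c = 0` stands
for `{x, hub}`. For a fixed base point `x`, the offsets `{0, 1, 2}, {3, 4}, {5, 6}, …` span cliques
of `W_m^(2)`, so an independent set meets each of these `m ⌊⌊m/2⌋/2⌋` cliques at most once. When
`⌊m/2⌋` is odd, the pairs at offset `⌊m/2⌋` are left over; an independent set contains at most
`⌊m/2⌋` of them, since `{x, x + ⌊m/2⌋}` and `{x - ⌊m/2⌋, x}` are adjacent (`m` odd) or equal (`m`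
even). Conversely, adjacent pairs have the form `{p, q}, {p, r}` with `q ~ r`, so the cyclic
distances from `p` to `q` and `r` differ by at most one and coincide only if `m = 2d + 1`. Hence the
pairs at odd distance below `m/2`, plus `⌊m/2⌋` disjoint antipodal pairs when `⌊m/2⌋` is odd, are
independent, and both counts equal `⌊m ⌊m/2⌋ / 2⌋`.
-/

open Finset Sum

theorem indepNum_eq_of_isIndepSet {V : Type*} {G : SimpleGraph V} {n : ℕ}
    (hex : ∃ s : Finset V, G.IsIndepSet s ∧ s.card = n)
    (hle : ∀ s : Finset V, G.IsIndepSet s → s.card ≤ n) : indepNum G = n := by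
  have hiff (s : Finset V) : G.IsIndepSet s ↔ ∀ a ∈ s, ∀ b ∈ s, ¬ G.Adj a b :=
    ⟨fun hs a ha b hb hab => hs ha hb hab.ne hab, fun hs a ha b hb _ => hs a ha b hb⟩
  obtain ⟨s, hs, rfl⟩ := hex
  refine le_antisymm (csSup_le ⟨_, s, rfl, (hiff s).1 hs⟩ ?_)
    (le_csSup ⟨s.card, ?_⟩ ⟨s, rfl, (hiff s).1 hs⟩)
  all_goals rintro _ ⟨t, rfl, ht⟩; exact hle t ((hiff t).2 ht)

theorem SimpleGraph.IsIndepSet.injOn_of_adj {V β : Type*} {G : SimpleGraph V} {s : Set V}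
    (hs : G.IsIndepSet s) {f : V → β} (hf : ∀ a b, f a = f b → a ≠ b → G.Adj a b) :
    s.InjOn f := fun a ha b hb hab =>
  by_contra fun hne => hs ha hb hne (hf a b hab hne)

theorem doubleVertexGraph_adj_iff {V : Type*} [DecidableEq V] {G : SimpleGraph V}
    {A B : {A : Finset V // A.card = 2}} :
    (doubleVertexGraph G).Adj A B ↔
      ∃ p q r, p ≠ q ∧ p ≠ r ∧ G.Adj q r ∧ A.1 = {p, q} ∧ B.1 = {p, r} := by
  constructor
  · rintro ⟨hne, h⟩
    wlog hAB : ∃ a b, G.Adj a b ∧ symmDiff A.1 B.1 = {a, b} generalizing A B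
    · obtain ⟨p, q, r, hpq, hpr, hqr, hB, hA⟩ :=
        this hne.symm h.symm (h.resolve_left hAB)
      exact ⟨p, r, q, hpr, hpq, hqr.symm, hA, hB⟩
    obtain ⟨a, b, hab, hsd⟩ := hAB
    -- `A \ B` and `B \ A` have equal sizes adding up to `#(A ∆ B) = 2`
    have hcard : (A.1 \ B.1).card + (B.1 \ A.1).card = 2 := by
      rw [← card_union_of_disjoint disjoint_sdiff_sdiff, ← sup_eq_union, ← symmDiff_def, hsd,
        card_pair hab.ne]
    have hAB := card_sdiff_comm (A.2.trans B.2.symm)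
    obtain ⟨q, hq⟩ := card_eq_one.1 (show (A.1 \ B.1).card = 1 by omega)
    obtain ⟨r, hr⟩ := card_eq_one.1 (show (B.1 \ A.1).card = 1 by omega)
    obtain ⟨p, hp⟩ := card_eq_one.1 (show (A.1 ∩ B.1).card = 1 by
      have := card_sdiff_add_card_inter A.1 B.1; rw [A.2] at this; omega)
    have hA : A.1 = {p, q} := by
      rw [← sdiff_union_inter A.1 B.1, hq, hp, union_comm, insert_eq]
    have hB : B.1 = {p, r} := by
      rw [← sdiff_union_inter B.1 A.1, hr, inter_comm, hp, union_comm, insert_eq]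
    have hqr : ({q, r} : Finset V) = {a, b} := by
      rw [← hsd, symmDiff_def, hq, hr, sup_eq_union, insert_eq]
    have hqA : q ∈ A.1 \ B.1 := hq ▸ mem_singleton_self q
    have hrB : r ∈ B.1 \ A.1 := hr ▸ mem_singleton_self r
    have hpB : p ∈ A.1 ∩ B.1 := hp ▸ mem_singleton_self p
    have hq' : q ∈ ({a, b} : Finset V) := hqr ▸ mem_insert_self q {r}
    have hr' : r ∈ ({a, b} : Finset V) := hqr ▸ mem_insert_of_mem (mem_singleton_self r)
    simp only [mem_sdiff, mem_inter, mem_insert, mem_singleton] at hqA hrB hpB hq' hr'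
    exact ⟨p, q, r, by grind, by grind, by grind [hab.symm], hA, hB⟩
  · rintro ⟨p, q, r, hpq, hpr, hqr, hA, hB⟩
    have hsymm : symmDiff A.1 B.1 = {q, r} := by
      ext x
      simp only [mem_symmDiff, hA, hB, mem_insert, mem_singleton]
      grind [hqr.ne]
    refine ⟨fun h => ?_, Or.inl ⟨q, r, hqr, hsymm⟩⟩
    have : q ∈ B.1 := h ▸ hA ▸ mem_insert_of_mem (mem_singleton_self q)
    rw [hB] at this
    grind [hqr.ne]

theorem Finset.two_mul_card_le_of_injective {α : Type*} [Fintype α] [DecidableEq α]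
    {X : Finset α} {σ : α → α} (hσ : σ.Injective) (h : ∀ x ∈ X, σ x ∉ X) :
    2 * X.card ≤ Fintype.card α := by
  have hdisj : Disjoint X (X.map ⟨σ, hσ⟩) := by
    rw [disjoint_right]
    rintro _ hy
    obtain ⟨x, hx, rfl⟩ := mem_map.1 hy
    exact h x hx
  calc 2 * X.card = (X ∪ X.map ⟨σ, hσ⟩).card := by
        rw [card_union_of_disjoint hdisj, card_map]; ring
    _ ≤ Fintype.card α := card_le_univ _

section Join
variable {V : Type*} {G : SimpleGraph V}

theorem joinK1_adj_inl_inl {x y : V} : (joinK1 G).Adj (inl x) (inl y) ↔ G.Adj x y := by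
  simp [joinK1, G.adj_comm y x]
  exact fun h => h.ne

theorem joinK1_adj_inl_inr (x : V) (u : Unit) : (joinK1 G).Adj (inl x) (inr u) := by
  simp [joinK1]

end Join

theorem cycleG_adj_iff {m : ℕ} {i j : Fin m} :
    (cycleG m).Adj i j ↔ i ≠ j ∧ (i.val + 1 = j.val ∨ j.val + 1 = i.val ∨
      i.val = 0 ∧ j.val = m - 1 ∨ j.val = 0 ∧ i.val = m - 1) := by
  simp only [cycleG, SimpleGraph.fromRel_adj]
  tauto

theorem Fin.val_sub_eq_ite {m : ℕ} (i j : Fin m) :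
    (i - j).val = if j.val ≤ i.val then i.val - j.val else m + i.val - j.val := by
  split_ifs with h
  · exact Fin.sub_val_of_le h
  · exact Fin.coe_sub_iff_lt.2 (lt_of_not_ge h)

theorem Nat.mul_div_two_div_two_eq (m : ℕ) :
    m * (m / 2) / 2 = m * (m / 2 / 2) + if m / 2 % 2 = 1 then m / 2 else 0 := by
  rcases Nat.even_or_odd' (m / 2) with ⟨t, ht | ht⟩
  · rw [show m / 2 / 2 = t by omega, ht, if_neg (by omega), mul_left_comm,
      Nat.mul_div_cancel_left _ two_pos, add_zero]
  · rw [show m / 2 / 2 = t by omega, ht, if_pos (by omega),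
      show m * (2 * t + 1) = m + 2 * (m * t) by ring, Nat.add_mul_div_left _ _ two_pos, ht,
      add_comm]

namespace Wheel

variable {m : ℕ}

abbrev Pair (m : ℕ) := {A : Finset (Fin m ⊕ Unit) // A.card = 2}

def cycleDist (i j : Fin m) : ℕ := min (j - i).val (i - j).val

theorem cycleDist_comm (i j : Fin m) : cycleDist i j = cycleDist j i := min_comm _ _

theorem cycleDist_self_add {x c : Fin m} (hc : c.val ≤ m / 2) : cycleDist x (x + c) = c.val := by
  unfold cycleDist
  rw [Fin.val_sub_eq_ite, Fin.val_sub_eq_ite, Fin.val_add_eq_ite]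
  have := x.isLt
  split_ifs <;> omega

theorem cycleDist_le_cycleDist_add_one (p : Fin m) {q r : Fin m} (h : (cycleG m).Adj q r) :
    cycleDist p q ≤ cycleDist p r + 1 := by
  rw [cycleG_adj_iff, Ne, Fin.ext_iff] at h
  unfold cycleDist
  simp only [Fin.val_sub_eq_ite]
  have := p.isLt; have := q.isLt; have := r.isLt
  split_ifs <;> omega

theorem two_mul_cycleDist_add_one {p q r : Fin m} (h : (cycleG m).Adj q r)
    (he : cycleDist p q = cycleDist p r) : 2 * cycleDist p q + 1 = m := by
  rw [cycleG_adj_iff, Ne, Fin.ext_iff] at h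
  unfold cycleDist at he ⊢
  simp only [Fin.val_sub_eq_ite] at he ⊢
  have := p.isLt; have := q.isLt; have := r.isLt
  split_ifs at he ⊢ <;> omega

variable [NeZero m]

/-- The rim pair `{x, x + c}` for `c ≠ 0`; the offset `c = 0` encodes the hub pair `{x, hub}`. -/
def pairAt (x c : Fin m) : Pair m :=
  if hc : c = 0 then ⟨{inl x, inr ()}, card_pair inl_ne_inr⟩
  else ⟨{inl x, inl (x + c)}, card_pair (by simpa using hc)⟩

theorem pairAt_zero (x : Fin m) : (pairAt x 0).1 = {inl x, inr ()} := by
  simp [pairAt]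

theorem pairAt_of_ne_zero {x c : Fin m} (hc : c ≠ 0) :
    (pairAt x c).1 = {inl x, inl (x + c)} := by
  simp [pairAt, hc]

theorem exists_pairAt (A : Pair m) :
    ∃ p : Fin m × Fin m, p.2.val ≤ m / 2 ∧ pairAt p.1 p.2 = A := by
  obtain ⟨u, v, huv, hA⟩ := card_eq_two.1 A.2
  rcases u with x | ⟨⟩ <;> rcases v with y | ⟨⟩
  · have hxy : x ≠ y := fun h => huv (h ▸ rfl)
    by_cases hle : (y - x).val ≤ m / 2
    · refine ⟨(x, y - x), hle, Subtype.ext ?_⟩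
      rw [pairAt_of_ne_zero (sub_ne_zero.2 hxy.symm), add_sub_cancel, hA]
    · refine ⟨(y, x - y), ?_, Subtype.ext ?_⟩
      · rw [Fin.val_sub_eq_ite] at hle ⊢
        have := Fin.val_ne_of_ne hxy
        split_ifs at hle ⊢ <;> omega
      · rw [pairAt_of_ne_zero (sub_ne_zero.2 hxy), add_sub_cancel, hA, pair_comm]
  · exact ⟨(x, 0), Nat.zero_le _, Subtype.ext (by rw [pairAt_zero, hA])⟩
  · exact ⟨(y, 0), Nat.zero_le _, Subtype.ext (by rw [pairAt_zero, hA, pair_comm])⟩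
  · exact absurd rfl huv

theorem adj_pairAt_pairAt {x c c' : Fin m} (hlt : c.val < c'.val)
    (hcls : (c.val - 1) / 2 = (c'.val - 1) / 2) :
    (doubleVertexGraph (wheelG m)).Adj (pairAt x c) (pairAt x c') := by
  have hc' : c' ≠ 0 := fun h => by simp [h] at hlt
  rw [doubleVertexGraph_adj_iff]
  by_cases hc : c = 0
  · subst hc
    exact ⟨inl x, inr (), inl (x + c'), inl_ne_inr, by simpa using hc',
      (joinK1_adj_inl_inr _ _).symm, pairAt_zero x, pairAt_of_ne_zero hc'⟩
  · refine ⟨inl x, inl (x + c), inl (x + c'), by simpa using hc, by simpa using hc',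
      joinK1_adj_inl_inl.2 (cycleG_adj_iff.2 ?_), pairAt_of_ne_zero hc, pairAt_of_ne_zero hc'⟩
    have hc0 : c.val ≠ 0 := Fin.val_ne_zero_iff.2 hc
    rw [Ne, Fin.ext_iff, Fin.val_add_eq_ite, Fin.val_add_eq_ite]
    have := x.isLt; have := c'.isLt
    split_ifs <;> omega

theorem adj_pairAt_pairAt_sub {x c : Fin m} (hc : c ≠ 0) (hm : 2 * c.val + 1 = m) :
    (doubleVertexGraph (wheelG m)).Adj (pairAt x c) (pairAt (x - c) c) := by
  rw [doubleVertexGraph_adj_iff]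
  refine ⟨inl x, inl (x + c), inl (x - c), by simpa using hc, by simp [eq_comm (a := x), hc],
    joinK1_adj_inl_inl.2 (cycleG_adj_iff.2 ?_), pairAt_of_ne_zero hc, ?_⟩
  · rw [Ne, Fin.ext_iff, Fin.val_add_eq_ite, Fin.val_sub_eq_ite]
    have := x.isLt
    split_ifs <;> omega
  · rw [pairAt_of_ne_zero hc, sub_add_cancel, pair_comm]

theorem pairAt_sub_self {x c : Fin m} (hm : 2 * c.val = m) : pairAt (x - c) c = pairAt x c := by
  have hc : c ≠ 0 := fun h => NeZero.ne m (by simp [h] at hm; omega)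
  have hsub : x - c = x + c := by
    rw [Fin.ext_iff, Fin.val_add_eq_ite, Fin.val_sub_eq_ite]
    have := x.isLt
    split_ifs <;> omega
  refine Subtype.ext ?_
  rw [pairAt_of_ne_zero hc, pairAt_of_ne_zero hc, sub_add_cancel, hsub, pair_comm]

theorem exists_cycleDist_eq_of_pairAt_eq {x c : Fin m} {p q : Fin m ⊕ Unit} (hc : c ≠ 0)
    (hcm : c.val ≤ m / 2) (h : (pairAt x c).1 = {p, q}) (hpq : p ≠ q) :
    ∃ i j, p = inl i ∧ q = inl j ∧ cycleDist i j = c.val := by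
  rw [pairAt_of_ne_zero hc] at h
  have hp : p ∈ ({inl x, inl (x + c)} : Finset _) := h ▸ mem_insert_self p {q}
  have hq : q ∈ ({inl x, inl (x + c)} : Finset _) := h ▸ mem_insert_of_mem (mem_singleton_self q)
  simp only [mem_insert, mem_singleton] at hp hq
  rcases hp with rfl | rfl <;> rcases hq with rfl | rfl
  · exact absurd rfl hpq
  · exact ⟨x, x + c, rfl, rfl, cycleDist_self_add hcm⟩
  · exact ⟨x + c, x, rfl, rfl, cycleDist_comm x (x + c) ▸ cycleDist_self_add hcm⟩
  · exact absurd rfl hpq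

theorem pairAt_eq_pairAt {x x' c c' : Fin m} (hc : c ≠ 0) (hc' : c' ≠ 0) (hcm : c.val ≤ m / 2)
    (hcm' : c'.val ≤ m / 2) (h : pairAt x c = pairAt x' c') :
    c = c' ∧ (x = x' ∨ 2 * c.val = m ∧ x = x' + c) := by
  have hA := pairAt_of_ne_zero (x := x) hc
  have hxc : (inl x : Fin m ⊕ Unit) ≠ inl (x + c) := by simpa using hc
  obtain ⟨i, j, hi, hj, hij⟩ := exists_cycleDist_eq_of_pairAt_eq hc' hcm' (h ▸ hA) hxc
  obtain rfl : c = c' := by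
    rw [← inl.inj hi, ← inl.inj hj, cycleDist_self_add hcm] at hij
    exact Fin.ext hij
  have hB := pairAt_of_ne_zero (x := x') hc
  rw [h] at hA
  have hx : inl x ∈ (pairAt x' c).1 := hA ▸ mem_insert_self _ _
  have hx' : inl x' ∈ (pairAt x c).1 := h ▸ hB ▸ mem_insert_self _ _
  rw [pairAt_of_ne_zero hc] at hx hx'
  simp only [mem_insert, mem_singleton, inl.injEq] at hx hx'
  refine ⟨rfl, or_iff_not_imp_left.2 fun hne => ?_⟩
  have hx₁ := hx.resolve_left hne
  have hx₂ := hx'.resolve_left (Ne.symm hne)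
  refine ⟨?_, hx₁⟩
  rw [Fin.ext_iff, Fin.val_add_eq_ite] at hx₁ hx₂
  have := Fin.val_ne_zero_iff.2 hc
  have := x.isLt; have := c.isLt
  split_ifs at hx₁ hx₂ <;> omega

theorem not_adj_pairAt_of_odd {x x' c c' : Fin m} (hc : c.val % 2 = 1) (hc' : c'.val % 2 = 1)
    (hcm : c.val < m / 2) (hcm' : c'.val ≤ m / 2) :
    ¬ (doubleVertexGraph (wheelG m)).Adj (pairAt x c) (pairAt x' c') := by
  intro h
  obtain ⟨p, q, r, hpq, hpr, hqr, hA, hB⟩ := doubleVertexGraph_adj_iff.1 h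
  have hc0 : c ≠ 0 := fun h0 => by simp [h0] at hc
  have hc0' : c' ≠ 0 := fun h0 => by simp [h0] at hc'
  obtain ⟨i, j, rfl, rfl, hij⟩ := exists_cycleDist_eq_of_pairAt_eq hc0 hcm.le hA hpq
  obtain ⟨i', k, hi', rfl, hik⟩ := exists_cycleDist_eq_of_pairAt_eq hc0' hcm' hB hpr
  obtain rfl := inl.inj hi'
  have hjk : (cycleG m).Adj j k := joinK1_adj_inl_inl.1 hqr
  have h1 := cycleDist_le_cycleDist_add_one i hjk
  have h2 := cycleDist_le_cycleDist_add_one i hjk.symm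
  have h3 := fun he => two_mul_cycleDist_add_one (p := i) hjk he
  omega

theorem not_adj_pairAt_half {x x' c : Fin m} (hc : c.val = m / 2) (hx : x.val < m / 2)
    (hx' : x'.val < m / 2) :
    ¬ (doubleVertexGraph (wheelG m)).Adj (pairAt x c) (pairAt x' c) := by
  intro h
  obtain ⟨p, q, r, -, -, -, hA, hB⟩ := doubleVertexGraph_adj_iff.1 h
  have hc0 : c ≠ 0 := fun h0 => by simp [h0] at hc; omega
  have hp : p ∈ (pairAt x c).1 := hA ▸ mem_insert_self _ _
  have hp' : p ∈ (pairAt x' c).1 := hB ▸ mem_insert_self _ _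
  rw [pairAt_of_ne_zero hc0] at hp hp'
  simp only [mem_insert, mem_singleton] at hp hp'
  have hxc : (x + c).val = x.val + c.val := by rw [Fin.val_add_eq_ite, if_neg (by omega)]
  have hxc' : (x' + c).val = x'.val + c.val := by rw [Fin.val_add_eq_ite, if_neg (by omega)]
  have hxx' : x = x' := by
    rw [Fin.ext_iff]
    rcases hp with rfl | rfl <;> rcases hp' with h' | h' <;>
      simp only [inl.injEq, Fin.ext_iff, hxc, hxc'] at h' <;> omega
  exact h.ne (by rw [hxx'])

/-- Rim pairs at odd distance below `m / 2` and, when `m / 2` is odd, the pairwise disjoint pairs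
`{x, x + m / 2}` with `x < m / 2`. -/
def IsIndepIndex (p : Fin m × Fin m) : Prop :=
  p.2.val % 2 = 1 ∧ p.2.val ≤ m / 2 ∧ (p.2.val = m / 2 → p.1.val < m / 2)

theorem injOn_pairAt :
    Set.InjOn (fun p : Fin m × Fin m => pairAt p.1 p.2) {p | IsIndepIndex p} := by
  rintro ⟨x, c⟩ ⟨hc, hcm, hx⟩ ⟨x', c'⟩ ⟨hc', hcm', hx'⟩ h
  dsimp only at hc hcm hx hc' hcm' hx' h
  have hc0 : c ≠ 0 := fun h0 => by simp [h0] at hc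
  have hc0' : c' ≠ 0 := fun h0 => by simp [h0] at hc'
  obtain ⟨rfl, rfl | ⟨hm, rfl⟩⟩ := pairAt_eq_pairAt hc0 hc0' hcm hcm' h
  · rfl
  · have hlt := hx (by omega)
    have := hx' (by omega)
    rw [Fin.val_add_eq_ite] at hlt
    split_ifs at hlt <;> omega

theorem not_adj_pairAt_of_isIndepIndex {p p' : Fin m × Fin m} (hp : IsIndepIndex p)
    (hp' : IsIndepIndex p') :
    ¬ (doubleVertexGraph (wheelG m)).Adj (pairAt p.1 p.2) (pairAt p'.1 p'.2) := by
  obtain ⟨hc, hcm, hx⟩ := hp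
  obtain ⟨hc', hcm', hx'⟩ := hp'
  rcases hcm.lt_or_eq with hlt | hcm
  · exact not_adj_pairAt_of_odd hc hc' hlt hcm'
  rcases hcm'.lt_or_eq with hlt' | hcm'
  · exact fun h => not_adj_pairAt_of_odd hc' hc hlt' hcm.le h.symm
  obtain ⟨x, c⟩ := p
  obtain ⟨x', c'⟩ := p'
  obtain rfl : c = c' := Fin.ext (hcm.trans hcm'.symm)
  exact not_adj_pairAt_half hcm (hx hcm) (hx' hcm')

def indepIndex :
    Fin m × Fin (m / 2 / 2) ⊕ Fin (if m / 2 % 2 = 1 then m / 2 else 0) → Fin m × Fin m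
  | inl (x, k) => (x, ⟨2 * k + 1, by have := k.isLt; omega⟩)
  | inr j => (⟨j, by have := Nat.pos_of_neZero m; have h := j.isLt; split_ifs at h <;> omega⟩,
      ⟨m / 2, Nat.div_lt_self (Nat.pos_of_neZero m) one_lt_two⟩)

theorem indepIndex_injective : (indepIndex (m := m)).Injective := by
  rintro (⟨x, k⟩ | j) (⟨x', k'⟩ | j') h <;>
    simp only [indepIndex, Prod.mk.injEq, Fin.ext_iff, inl.injEq, inr.injEq] at h ⊢
  all_goals omega

theorem isIndepIndex_indepIndex (a) : IsIndepIndex (indepIndex (m := m) a) := by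
  rcases a with ⟨x, k⟩ | j
  · have := k.isLt
    simp only [IsIndepIndex, indepIndex]
    omega
  · have h := j.isLt
    simp only [IsIndepIndex, indepIndex]
    split_ifs at h <;> omega

theorem exists_isIndepSet_card_eq : ∃ s : Finset (Pair m),
    (doubleVertexGraph (wheelG m)).IsIndepSet s ∧
      s.card = m * (m / 2 / 2) + if m / 2 % 2 = 1 then m / 2 else 0 := by
  have hinj : (fun a => pairAt (indepIndex (m := m) a).1 (indepIndex a).2).Injective :=
    fun a b h => indepIndex_injective (injOn_pairAt (isIndepIndex_indepIndex a)
      (isIndepIndex_indepIndex b) h)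
  refine ⟨univ.map ⟨_, hinj⟩, ?_, ?_⟩
  · rw [coe_map, coe_univ, Set.image_univ]
    rintro _ ⟨a, rfl⟩ _ ⟨b, rfl⟩ -
    exact not_adj_pairAt_of_isIndepIndex (isIndepIndex_indepIndex a) (isIndepIndex_indepIndex b)
  · simp

noncomputable def presentation (A : Pair m) : Fin m × Fin m := (exists_pairAt A).choose

theorem presentation_snd_le (A : Pair m) : (presentation A).2.val ≤ m / 2 :=
  (exists_pairAt A).choose_spec.1

theorem pairAt_presentation (A : Pair m) : pairAt (presentation A).1 (presentation A).2 = A :=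
  (exists_pairAt A).choose_spec.2

/-- The pairs `{x, hub}, {x, x + 1}, {x, x + 2}` and, for `k ≥ 1`,
`{x, x + 2k + 1}, {x, x + 2k + 2}` form cliques; this names the clique containing a pair. -/
noncomputable def cliqueIndex (A : Pair m) : Fin m × ℕ :=
  ((presentation A).1, ((presentation A).2.val - 1) / 2)

theorem adj_of_cliqueIndex_eq {A B : Pair m} (h : cliqueIndex A = cliqueIndex B) (hne : A ≠ B) :
    (doubleVertexGraph (wheelG m)).Adj A B := by
  rw [← pairAt_presentation A, ← pairAt_presentation B] at hne ⊢
  obtain ⟨hx, hcls⟩ := Prod.mk.inj h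
  rw [hx] at hne ⊢
  rcases lt_trichotomy (presentation A).2.val (presentation B).2.val with hlt | heq | hgt
  · exact adj_pairAt_pairAt hlt hcls
  · exact absurd (by rw [Fin.ext heq]) hne
  · exact (adj_pairAt_pairAt hgt hcls.symm).symm

/-- The pairs `{x, x + m / 2}` for odd `m / 2`: the only pairs not covered by the cliques. -/
def IsOddAntipodal (A : Pair m) : Prop := (presentation A).2.val = m / 2 ∧ m / 2 % 2 = 1

noncomputable instance : DecidablePred (IsOddAntipodal (m := m)) := fun _ => instDecidableAnd

theorem card_filter_not_isOddAntipodal_le (hm : 4 ≤ m) {S : Finset (Pair m)}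
    (hS : (doubleVertexGraph (wheelG m)).IsIndepSet S) :
    (S.filter (fun A => ¬ IsOddAntipodal A)).card ≤ m * (m / 2 / 2) := by
  set T := S.filter (fun A => ¬ IsOddAntipodal A)
  have hmaps : Set.MapsTo cliqueIndex (T : Set (Pair m))
      (univ ×ˢ range (m / 2 / 2) : Finset (Fin m × ℕ)) := by
    intro A hA
    rw [mem_coe, mem_filter, IsOddAntipodal] at hA
    have := presentation_snd_le A
    simp only [cliqueIndex, coe_product, coe_univ, coe_range, Set.mem_prod, Set.mem_univ,
      Set.mem_Iio, true_and]
    omega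
  have hTS : (T : Set (Pair m)) ⊆ S := coe_subset.2 (filter_subset _ S)
  have hinj := SimpleGraph.IsIndepSet.injOn_of_adj (hS.mono hTS) fun _ _ => adj_of_cliqueIndex_eq
  simpa using card_le_card_of_injOn _ hmaps hinj

theorem card_filter_isOddAntipodal_le {S : Finset (Pair m)}
    (hS : (doubleVertexGraph (wheelG m)).IsIndepSet S) :
    (S.filter IsOddAntipodal).card ≤ if m / 2 % 2 = 1 then m / 2 else 0 := by
  split_ifs with hodd
  swap
  · rw [Nat.le_zero, card_eq_zero, filter_eq_empty_iff]
    exact fun A _ hA => hodd hA.2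
  set T := S.filter IsOddAntipodal
  set half : Fin m := ⟨m / 2, Nat.div_lt_self (Nat.pos_of_neZero m) one_lt_two⟩
  have hT {A} (hA : A ∈ T) : pairAt (presentation A).1 half = A := by
    convert pairAt_presentation A using 2
    exact Fin.ext (mem_filter.1 hA).2.1.symm
  have hinj : Set.InjOn (fun A => (presentation A).1) (T : Set (Pair m)) :=
    fun A hA B hB hx => by rw [← hT hA, ← hT hB, show (presentation A).1 = _ from hx]
  -- shifting a base point by `-(m / 2)` leaves the base points: for odd `m` the two pairs would be
  -- adjacent, for even `m` they would coincide
  have hshift : ∀ x ∈ T.image (fun A => (presentation A).1),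
      x - half ∉ T.image (fun A => (presentation A).1) := by
    simp only [mem_image]
    rintro _ ⟨A, hA, rfl⟩ ⟨B, hB, hx⟩
    have hAB := hT hB
    rw [hx] at hAB
    rcases Nat.even_or_odd' m with ⟨k, hk | hk⟩
    · rw [pairAt_sub_self (by simp [half]; omega), hT hA] at hAB
      subst hAB
      exact absurd (congrArg Fin.val (sub_eq_self.1 hx.symm)) (by simp [half]; omega)
    · have hadj := adj_pairAt_pairAt_sub (x := (presentation A).1) (c := half)
        (by simp [half, Fin.ext_iff]; omega) (by simp [half]; omega)
      rw [hT hA, hAB] at hadj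
      exact hS (filter_subset _ _ hA) (filter_subset _ _ hB) hadj.ne hadj
  have := Finset.two_mul_card_le_of_injective (sub_left_injective (b := half)) hshift
  rw [card_image_of_injOn hinj, Fintype.card_fin] at this
  omega

theorem card_le_of_isIndepSet (hm : 4 ≤ m) {S : Finset (Pair m)}
    (hS : (doubleVertexGraph (wheelG m)).IsIndepSet S) :
    S.card ≤ m * (m / 2 / 2) + if m / 2 % 2 = 1 then m / 2 else 0 := by
  rw [← card_filter_add_card_filter_not IsOddAntipodal, add_comm]
  exact add_le_add (card_filter_not_isOddAntipodal_le hm hS) (card_filter_isOddAntipodal_le hS)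

end Wheel

/-- For every integer `m ≥ 4`, the independence number of the double vertex graph of
the wheel graph `W_{m,1}` equals `⌊(m/2)·⌊m/2⌋⌋`. -/
theorem indepNum_doubleVertexGraph_wheel (m : ℕ) (hm : 4 ≤ m) :
    indepNum (doubleVertexGraph (wheelG m)) = m * (m / 2) / 2 := by
  have : NeZero m := ⟨by omega⟩
  rw [Nat.mul_div_two_div_two_eq]
  exact indepNum_eq_of_isIndepSet Wheel.exists_isIndepSet_card_eq
    fun _ => Wheel.card_le_of_isIndepSet hm
end

section
/- For every integer n ≥ 3, the pair graph C(P_n) of the path P_n is isomorphic to the double vertex graph of the path P_{n+1}. -/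
/-!
Sorting identifies `Sym2 (Fin n)` with the pairs `i ≤ j` and the 2-subsets of `Fin (n + 1)` with
the pairs `a < b`. In these coordinates both graphs are induced subgraphs of the grid `P □ P`:
sorted pairs are adjacent iff they agree in one coordinate and are consecutive in the other. For
`G^(2)` this holds because it is the pair graph restricted to the off-diagonal. The shift
`(i, j) ↦ (i, j + 1)` carries the first staircase onto the second and preserves grid adjacency.
-/

open SimpleGraph Finset
open scoped symmDiff

theorem Finset.symmDiff_pair_pair {α : Type*} [DecidableEq α] {c x y : α}
    (hcx : c ≠ x) (hcy : c ≠ y) (hxy : x ≠ y) : ({c, x} : Finset α) ∆ {c, y} = {x, y} := by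
  ext z
  simp only [mem_symmDiff, mem_insert, mem_singleton]
  grind

theorem Finset.exists_eq_pair_of_symmDiff_eq_pair {α : Type*} [DecidableEq α] {A B : Finset α}
    {x y : α} (hA : #A = 2) (hB : #B = 2) (hxy : x ≠ y) (h : A ∆ B = {x, y}) :
    ∃ c, A = {c, x} ∧ B = {c, y} ∨ A = {c, y} ∧ B = {c, x} := by
  have hcard : #(A ∆ B) = 2 := by rw [h, card_pair hxy]
  obtain ⟨c, hc⟩ : (A ∩ B).Nonempty := by
    rw [nonempty_iff_ne_empty, ne_eq, ← disjoint_iff_inter_eq_empty]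
    intro hdisj
    rw [symmDiff_eq_union hdisj, card_union_of_disjoint hdisj] at hcard
    omega
  obtain ⟨hcA, hcB⟩ := mem_inter.mp hc
  obtain ⟨a, ha⟩ := card_eq_one.mp (show #(A.erase c) = 1 by rw [card_erase_of_mem hcA, hA])
  obtain ⟨b, hb⟩ := card_eq_one.mp (show #(B.erase c) = 1 by rw [card_erase_of_mem hcB, hB])
  have hac : a ≠ c := ne_of_mem_erase (ha ▸ mem_singleton_self a)
  have hbc : b ≠ c := ne_of_mem_erase (hb ▸ mem_singleton_self b)
  rw [← insert_erase hcA, ← insert_erase hcB, ha, hb] at h ⊢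
  have hab : a ≠ b := by
    rintro rfl
    rw [symmDiff_self] at h
    exact insert_ne_empty _ _ h.symm
  rw [symmDiff_pair_pair hac.symm hbc.symm hab, ← coe_inj, coe_pair, coe_pair,
    Set.pair_eq_pair_iff] at h
  refine ⟨c, ?_⟩
  rcases h with ⟨rfl, rfl⟩ | ⟨rfl, rfl⟩
  · exact Or.inl ⟨rfl, rfl⟩
  · exact Or.inr ⟨rfl, rfl⟩

theorem Sym2.mk_eq_mk_of_pair_eq {α : Type*} [DecidableEq α] {a b c d : α}
    (h : ({a, b} : Finset α) = {c, d}) : s(a, b) = s(c, d) :=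
  Sym2.eq_iff.mpr (Set.pair_eq_pair_iff.mp (by rw [← coe_pair, ← coe_pair, h]))

theorem pairGraph_adj {V : Type*} {G : SimpleGraph V} {s t : Sym2 V} :
    (pairGraph G).Adj s t ↔ ∃ a x y, G.Adj x y ∧ s = s(a, x) ∧ t = s(a, y) := by
  simp only [pairGraph, fromRel_adj]
  constructor
  · rintro ⟨-, h | ⟨a, x, y, hxy, rfl, rfl⟩⟩
    · exact h
    · exact ⟨a, y, x, hxy.symm, rfl, rfl⟩
  · rintro ⟨a, x, y, hxy, rfl, rfl⟩
    exact ⟨fun h => hxy.ne (Sym2.congr_right.mp h), Or.inl ⟨a, x, y, hxy, rfl, rfl⟩⟩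

theorem tokenGraph_adj {V : Type*} [DecidableEq V] {k : ℕ} {G : SimpleGraph V}
    {A B : {A : Finset V // #A = k}} :
    (tokenGraph k G).Adj A B ↔ ∃ x y, G.Adj x y ∧ A.1 ∆ B.1 = {x, y} := by
  simp only [tokenGraph, fromRel_adj]
  constructor
  · rintro ⟨-, h | ⟨x, y, hxy, h⟩⟩
    · exact h
    · exact ⟨y, x, hxy.symm, by rw [symmDiff_comm, h, pair_comm]⟩
  · rintro ⟨x, y, hxy, h⟩
    refine ⟨fun hAB => ?_, Or.inl ⟨x, y, hxy, h⟩⟩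
    rw [hAB, symmDiff_self] at h
    exact insert_ne_empty _ _ h.symm

theorem doubleVertexGraph_adj_pair {V : Type*} [DecidableEq V] {G : SimpleGraph V}
    {a b c d : V} (hab : a ≠ b) (hcd : c ≠ d) :
    (doubleVertexGraph G).Adj ⟨{a, b}, card_pair hab⟩ ⟨{c, d}, card_pair hcd⟩ ↔
      (pairGraph G).Adj s(a, b) s(c, d) := by
  rw [doubleVertexGraph, tokenGraph_adj, pairGraph_adj]
  constructor
  · rintro ⟨x, y, hxy, h⟩
    obtain ⟨e, ⟨h₁, h₂⟩ | ⟨h₁, h₂⟩⟩ :=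
      exists_eq_pair_of_symmDiff_eq_pair (card_pair hab) (card_pair hcd) hxy.ne h
    · exact ⟨e, x, y, hxy, Sym2.mk_eq_mk_of_pair_eq h₁, Sym2.mk_eq_mk_of_pair_eq h₂⟩
    · exact ⟨e, y, x, hxy.symm, Sym2.mk_eq_mk_of_pair_eq h₁, Sym2.mk_eq_mk_of_pair_eq h₂⟩
  · rintro ⟨e, x, y, hxy, h₁, h₂⟩
    have h₁' := congrArg Sym2.toFinset h₁
    have h₂' := congrArg Sym2.toFinset h₂
    simp only [Sym2.toFinset_mk_eq] at h₁' h₂'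
    have hex : e ≠ x := by rintro rfl; simp_all
    have hey : e ≠ y := by rintro rfl; simp_all
    refine ⟨x, y, hxy, ?_⟩
    dsimp only
    rw [h₁', h₂', symmDiff_pair_pair hex hey hxy.ne]

theorem pathG_adj {n : ℕ} {x y : Fin n} :
    (pathG n).Adj x y ↔ (x : ℕ) + 1 = y ∨ (y : ℕ) + 1 = x := by
  simp only [pathG, fromRel_adj, and_iff_right_iff_imp]
  grind

theorem pathG_adj_castSucc {n : ℕ} {x y : Fin n} :
    (pathG (n + 1)).Adj x.castSucc y.castSucc ↔ (pathG n).Adj x y := by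
  simp only [pathG_adj, Fin.val_castSucc]

theorem pathG_adj_succ {n : ℕ} {x y : Fin n} :
    (pathG (n + 1)).Adj x.succ y.succ ↔ (pathG n).Adj x y := by
  simp only [pathG_adj, Fin.val_succ, Nat.add_right_cancel_iff]

theorem pairGraph_pathG_adj_mk {n : ℕ} {i j k l : Fin n} (hij : i ≤ j) (hkl : k ≤ l) :
    (pairGraph (pathG n)).Adj s(i, j) s(k, l) ↔ (pathG n □ pathG n).Adj (i, j) (k, l) := by
  rw [Fin.le_def] at hij hkl
  simp only [pairGraph_adj, boxProd_adj, pathG_adj, Sym2.eq_iff, Fin.ext_iff]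
  constructor
  · rintro ⟨a, x, y, hxy, h₁, h₂⟩
    omega
  · rintro (⟨h, h'⟩ | ⟨h, h'⟩)
    · exact ⟨j, i, k, by omega, by omega, by omega⟩
    · exact ⟨i, j, l, by omega, by omega, by omega⟩

noncomputable def pairsLtEquivCardTwo (α : Type*) [LinearOrder α] :
    {p : α × α // p.1 < p.2} ≃ {A : Finset α // #A = 2} :=
  Equiv.ofBijective (fun p => ⟨{p.1.1, p.1.2}, card_pair p.2.ne⟩) <| by
    constructor
    · rintro ⟨⟨a, b⟩, hab⟩ ⟨⟨c, d⟩, hcd⟩ h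
      obtain ⟨rfl, rfl⟩ | ⟨rfl, rfl⟩ :=
        Sym2.eq_iff.mp (Sym2.mk_eq_mk_of_pair_eq (congrArg Subtype.val h))
      · rfl
      · exact (lt_asymm hab hcd).elim
    · rintro ⟨A, hA⟩
      obtain ⟨x, y, hxy, rfl⟩ := card_eq_two.mp hA
      rcases hxy.lt_or_gt with h | h
      · exact ⟨⟨(x, y), h⟩, rfl⟩
      · exact ⟨⟨(y, x), h⟩, Subtype.ext (pair_comm y x)⟩

def Fin.pairsLeEquivPairsLt (n : ℕ) :
    {p : Fin n × Fin n // p.1 ≤ p.2} ≃ {p : Fin (n + 1) × Fin (n + 1) // p.1 < p.2} where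
  toFun p := ⟨(p.1.1.castSucc, p.1.2.succ), castSucc_lt_succ_iff.mpr p.2⟩
  invFun q := ⟨(q.1.1.castPred (ne_last_of_lt q.2), q.1.2.pred (ne_zero_of_lt q.2)),
    (castPred_le_pred_iff (ne_last_of_lt q.2) (ne_zero_of_lt q.2)).mpr q.2⟩
  left_inv p := by simp
  right_inv q := by simp

def pathGBoxProdLeIsoPairGraph (n : ℕ) :
    (pathG n □ pathG n).induce {p | p.1 ≤ p.2} ≃g pairGraph (pathG n) where
  toEquiv := Sym2.sortEquiv.symm
  map_rel_iff' {p q} := pairGraph_pathG_adj_mk p.2 q.2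

def pathGBoxProdLeIsoLt (n : ℕ) :
    (pathG n □ pathG n).induce {p | p.1 ≤ p.2} ≃g
      (pathG (n + 1) □ pathG (n + 1)).induce {p | p.1 < p.2} where
  toEquiv := Fin.pairsLeEquivPairsLt n
  map_rel_iff' {p q} := by
    simp only [comap_adj, Function.Embedding.subtype_apply, Fin.pairsLeEquivPairsLt,
      Equiv.coe_fn_mk, boxProd_adj, pathG_adj_castSucc, pathG_adj_succ, Fin.castSucc_inj,
      Fin.succ_inj]

noncomputable def pathGBoxProdLtIsoDoubleVertexGraph (n : ℕ) :
    (pathG n □ pathG n).induce {p | p.1 < p.2} ≃g doubleVertexGraph (pathG n) where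
  toEquiv := pairsLtEquivCardTwo (Fin n)
  map_rel_iff' {p q} :=
    (doubleVertexGraph_adj_pair p.2.ne q.2.ne).trans (pairGraph_pathG_adj_mk p.2.le q.2.le)

theorem pairGraph_path_iso_doubleVertexGraph_path_general (n : ℕ) :
    Nonempty (pairGraph (pathG n) ≃g doubleVertexGraph (pathG (n + 1))) :=
  ⟨(pathGBoxProdLeIsoPairGraph n).symm.trans
    ((pathGBoxProdLeIsoLt n).trans (pathGBoxProdLtIsoDoubleVertexGraph (n + 1)))⟩

/-- For every integer `n ≥ 3`, the pair graph `C(P_n)` is isomorphic to the double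
vertex graph of the path `P_{n+1}`. -/
theorem pairGraph_path_iso_doubleVertexGraph_path (n : ℕ) (hn : 3 ≤ n) :
    Nonempty (pairGraph (pathG n) ≃g doubleVertexGraph (pathG (n + 1))) :=
  pairGraph_path_iso_doubleVertexGraph_path_general n
end

section
/- For every integer m ≥ 2, the independence number of the double vertex graph of the path P_m equals ⌊m²/4⌋. -/
open Finset

section Independence

variable {V : Type*} {G : SimpleGraph V}

theorem indepNum_eq_of_forall_card_le {n : ℕ} (s : Finset V) (hcard : s.card = n)
    (hs : ∀ a ∈ s, ∀ b ∈ s, ¬ G.Adj a b)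
    (hle : ∀ t : Finset V, (∀ a ∈ t, ∀ b ∈ t, ¬ G.Adj a b) → t.card ≤ n) :
    indepNum G = n :=
  IsGreatest.csSup_eq ⟨⟨s, hcard, hs⟩, by rintro _ ⟨t, rfl, ht⟩; exact hle t ht⟩

theorem card_le_of_injOn_adj {s t : Finset V} (hs : ∀ a ∈ s, ∀ b ∈ s, ¬ G.Adj a b) (f : V → V)
    (hmaps : ∀ v ∈ s, f v ∈ t) (hfix : ∀ v ∈ s, v ∈ t → f v = v)
    (hadj : ∀ v ∈ s, v ∉ t → G.Adj v (f v)) (hinj : Set.InjOn f {v | v ∈ s ∧ v ∉ t}) :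
    s.card ≤ t.card := by
  refine card_le_card_of_injOn f hmaps fun v hv w hw hvw => ?_
  by_cases hvt : v ∈ t <;> by_cases hwt : w ∈ t
  · rwa [hfix v hv hvt, hfix w hw hwt] at hvw
  · exact absurd (hfix v hv hvt ▸ hvw ▸ hadj w hw hwt) (hs w hw v hv)
  · exact absurd (hfix w hw hwt ▸ hvw.symm ▸ hadj v hv hvt) (hs v hv w hw)
  · exact hinj ⟨hv, hvt⟩ ⟨hw, hwt⟩ hvw

end Independence

theorem Finset.sum_symmDiff_charTwo {ι R : Type*} [DecidableEq ι] [Ring R] [CharP R 2]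
    (f : ι → R) (A B : Finset ι) :
    ∑ x ∈ symmDiff A B, f x = ∑ x ∈ A, f x + ∑ x ∈ B, f x := by
  have hsplit := sum_sdiff (f := f) (inter_subset_union (s := A) (t := B))
  rw [← sum_union_inter, ← hsplit, add_assoc, CharTwo.add_self_eq_zero, add_zero,
    symmDiff_eq_sup_sdiff_inf]
  rfl

section TokenGraph

variable {V : Type*} [DecidableEq V] {G : SimpleGraph V} {k : ℕ}

theorem tokenGraph_adj_of_symmDiff_eq {A B : {A : Finset V // A.card = k}} {a b : V}
    (hab : G.Adj a b) (h : symmDiff A.1 B.1 = {a, b}) : (tokenGraph k G).Adj A B := by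
  refine (SimpleGraph.fromRel_adj _ _ _).2 ⟨?_, Or.inl ⟨a, b, hab, h⟩⟩
  rintro rfl
  exact (insert_nonempty a {b}).ne_empty (by simpa using h.symm)

theorem tokenGraph_adj_sum_ne (c : G.Coloring (ZMod 2)) {A B : {A : Finset V // A.card = k}}
    (h : (tokenGraph k G).Adj A B) : ∑ x ∈ A.1, c x ≠ ∑ x ∈ B.1, c x := by
  have key : ∀ A B : Finset V, ∀ a b, G.Adj a b → symmDiff A B = {a, b} →
      ∑ x ∈ A, c x ≠ ∑ x ∈ B, c x := by
    intro A B a b hab hAB hsum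
    rw [← CharTwo.add_eq_zero, ← sum_symmDiff_charTwo, hAB, sum_pair hab.ne,
      CharTwo.add_eq_zero] at hsum
    exact c.valid hab hsum
  obtain ⟨-, ⟨a, b, hab, hAB⟩ | ⟨a, b, hab, hAB⟩⟩ := (SimpleGraph.fromRel_adj _ _ _).1 h
  · exact key _ _ a b hab hAB
  · exact (key _ _ a b hab (symmDiff_comm A.1 B.1 ▸ hAB)).symm

end TokenGraph

theorem ZMod.ne_zero_iff_eq_one {x : ZMod 2} : x ≠ 0 ↔ x = 1 := by
  revert x; decide


theorem Nat.add_one_div_two_mul_div_two (m : ℕ) : (m + 1) / 2 * (m / 2) = m ^ 2 / 4 := by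
  obtain ⟨q, rfl | rfl⟩ := m.even_or_odd'
  · rw [show (2 * q + 1) / 2 = q by omega, show 2 * q / 2 = q by omega,
      show (2 * q) ^ 2 = 4 * (q * q) by ring]
    omega
  · rw [show (2 * q + 1 + 1) / 2 = q + 1 by omega, show (2 * q + 1) / 2 = q by omega,
      show (2 * q + 1) ^ 2 = 4 * ((q + 1) * q) + 1 by ring]
    omega

theorem card_filter_fin_even_odd (m : ℕ) :
    #{i : Fin m | Even (i : ℕ)} = (m + 1) / 2 ∧ #{i : Fin m | Odd (i : ℕ)} = m / 2 := by
  induction m with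
  | zero => simp
  | succ m ih =>
    simp only [Fin.card_filter_univ_succ', Fin.val_zero, Fin.val_succ, Nat.even_add_one,
      Nat.odd_add_one, Nat.not_even_iff_odd, Nat.not_odd_iff_even, ih, Even.zero, ↓reduceIte,
      Nat.not_odd_zero, zero_add, and_true]
    omega

def pathColoring (m : ℕ) : (pathG m).Coloring (ZMod 2) :=
  SimpleGraph.Coloring.mk (fun i => ((i : ℕ) : ZMod 2)) fun {i j} h => by
    rcases ((SimpleGraph.fromRel_adj _ _ _).1 h).2 with h | h <;> simp [← h]

theorem pathColoring_apply {m : ℕ} (i : Fin m) : pathColoring m i = ((i : ℕ) : ZMod 2) := rfl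

abbrev TwoSubset (V : Type*) := {A : Finset V // A.card = 2}

namespace TwoSubset

theorem nonempty {V : Type*} (A : TwoSubset V) : A.1.Nonempty :=
  card_pos.1 (by rw [A.2]; exact two_pos)

theorem card_filter_sum_eq_one {V : Type*} [DecidableEq V] [Fintype V] (c : V → ZMod 2) :
    #{A : TwoSubset V | ∑ x ∈ A.1, c x = 1} =
      #{v | c v = 0} * #{v | c v = 1} := by
  rw [← card_product]
  symm
  have hne {p : V × V} (hp : p ∈ univ.filter (c · = 0) ×ˢ univ.filter (c · = 1)) :
      p.1 ≠ p.2 := by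
    simp only [mem_product, mem_filter_univ] at hp
    exact fun h => zero_ne_one (hp.1.symm.trans (h ▸ hp.2))
  refine card_bij (fun p hp => ⟨{p.1, p.2}, card_pair (hne hp)⟩) ?_ ?_ ?_
  · intro p hp
    have hp' := hp
    simp only [mem_product, mem_filter_univ] at hp'
    simp [sum_pair (hne hp), hp'.1, hp'.2]
  · rintro ⟨a, b⟩ hp ⟨a', b'⟩ hp' h
    simp only [mem_product, mem_filter_univ, Subtype.mk.injEq] at hp hp' h
    rw [← coe_inj, coe_pair, coe_pair, Set.pair_eq_pair_iff] at h
    rcases h with ⟨rfl, rfl⟩ | ⟨rfl, rfl⟩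
    · rfl
    · exact absurd (hp.1.symm.trans hp'.2) zero_ne_one
  · rintro ⟨A, hA⟩ hsum
    obtain ⟨x, y, hxy, rfl⟩ := card_eq_two.1 hA
    simp only [mem_filter_univ, sum_pair hxy] at hsum
    have hcases : ∀ u v : ZMod 2, u + v = 1 → u = 0 ∧ v = 1 ∨ u = 1 ∧ v = 0 := by decide
    rcases hcases _ _ hsum with ⟨hx, hy⟩ | ⟨hx, hy⟩
    · exact ⟨(x, y), by simp [hx, hy], rfl⟩
    · exact ⟨(y, x), by simp [hx, hy], by simp [pair_comm]⟩


section LinearOrder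

variable {V : Type*} [LinearOrder V] (A : TwoSubset V)

def lo : V := A.1.min' (nonempty A)

def hi : V := A.1.max' (nonempty A)

theorem lo_lt_hi : lo A < hi A := min'_lt_max'_of_card _ (by rw [A.2]; exact one_lt_two)

theorem eq_pair_lo_hi : A.1 = {lo A, hi A} :=
  (eq_of_subset_of_card_le (insert_subset (min'_mem _ _) (singleton_subset_iff.2 (max'_mem _ _)))
    (A.2.trans (card_pair (lo_lt_hi A).ne).symm).le).symm

end LinearOrder

section Path

variable {m : ℕ} (A : TwoSubset (Fin m))

theorem lo_add_one_lt_hi_of_sum_eq_zero (h : ∑ x ∈ A.1, pathColoring m x = 0) :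
    (lo A).val + 1 < (hi A).val := by
  rw [eq_pair_lo_hi A, sum_pair (lo_lt_hi A).ne, pathColoring_apply, pathColoring_apply,
    ← Nat.cast_add, ZMod.natCast_eq_zero_iff_even, Nat.even_iff] at h
  have := Fin.lt_def.1 (lo_lt_hi A)
  omega

def shiftLo (h : (lo A).val + 1 < (hi A).val) : TwoSubset (Fin m) :=
  ⟨{⟨lo A + 1, h.trans (hi A).2⟩, hi A}, card_pair (Fin.ne_of_val_ne h.ne)⟩

theorem adj_shiftLo (h : (lo A).val + 1 < (hi A).val) :
    (doubleVertexGraph (pathG m)).Adj A (shiftLo A h) := by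
  refine tokenGraph_adj_of_symmDiff_eq (a := lo A) (b := ⟨lo A + 1, h.trans (hi A).2⟩)
    ((SimpleGraph.fromRel_adj _ _ _).2 ⟨Fin.ne_of_val_ne (by simp), Or.inl rfl⟩) ?_
  rw [eq_pair_lo_hi A]
  ext x
  simp only [shiftLo, mem_symmDiff, mem_insert, mem_singleton, Fin.ext_iff]
  have := Fin.lt_def.1 (lo_lt_hi A)
  omega

theorem lo_shiftLo (h : (lo A).val + 1 < (hi A).val) :
    lo (shiftLo A h) = ⟨lo A + 1, h.trans (hi A).2⟩ :=
  (min'_pair _ _).trans (min_eq_left (Fin.le_def.2 h.le))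

theorem hi_shiftLo (h : (lo A).val + 1 < (hi A).val) : hi (shiftLo A h) = hi A :=
  (max'_pair _ _).trans (max_eq_right (Fin.le_def.2 h.le))

theorem shiftLo_inj {A B : TwoSubset (Fin m)} (hA : (lo A).val + 1 < (hi A).val)
    (hB : (lo B).val + 1 < (hi B).val) (h : shiftLo A hA = shiftLo B hB) : A = B := by
  have hlo : lo A = lo B := by
    have := congrArg lo h
    rw [lo_shiftLo, lo_shiftLo, Fin.mk.injEq, add_left_inj] at this
    exact Fin.ext this
  have hhi : hi A = hi B := by simpa [hi_shiftLo] using congrArg hi h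
  exact Subtype.ext (by rw [eq_pair_lo_hi A, eq_pair_lo_hi B, hlo, hhi])

end Path

end TwoSubset

open TwoSubset in
theorem card_le_card_filter_pathColoring_sum_eq_one {m : ℕ}
    {s : Finset (TwoSubset (Fin m))}
    (hs : ∀ a ∈ s, ∀ b ∈ s, ¬ (doubleVertexGraph (pathG m)).Adj a b) :
    s.card ≤ #{A : TwoSubset (Fin m) | ∑ x ∈ A.1, pathColoring m x = 1} := by
  set σ : TwoSubset (Fin m) → ZMod 2 := fun A => ∑ x ∈ A.1, pathColoring m x
  have hzero {A} (hA : A ∉ ({A | σ A = 1} : Finset _)) : σ A = 0 :=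
    by_contra fun h => hA ((mem_filter_univ A).2 (ZMod.ne_zero_iff_eq_one.1 h))
  let f A := if h : σ A = 0 then shiftLo A (lo_add_one_lt_hi_of_sum_eq_zero A h) else A
  have hf {A} (h : σ A = 0) : f A = shiftLo A (lo_add_one_lt_hi_of_sum_eq_zero A h) := dif_pos h
  have hf' {A} (h : σ A ≠ 0) : f A = A := dif_neg h
  refine card_le_of_injOn_adj hs f (fun A _ => ?_) (fun A _ hA => hf' ?_)
    (fun A _ hA => hf (hzero hA) ▸ adj_shiftLo A _) ?_
  · rw [mem_filter_univ, ← ZMod.ne_zero_iff_eq_one]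
    by_cases h : σ A = 0
    · rw [hf h, ← h]
      exact (tokenGraph_adj_sum_ne (pathColoring m) (adj_shiftLo A _)).symm
    · rwa [hf' h]
  · exact ZMod.ne_zero_iff_eq_one.2 ((mem_filter_univ A).1 hA)
  · rintro A ⟨-, hA⟩ B ⟨-, hB⟩ hAB
    rw [hf (hzero hA), hf (hzero hB)] at hAB
    exact shiftLo_inj _ _ hAB

theorem indepNum_doubleVertexGraph_path_general (m : ℕ) :
    indepNum (doubleVertexGraph (pathG m)) = m ^ 2 / 4 := by
  have hcard : #{A : TwoSubset (Fin m) | ∑ x ∈ A.1, pathColoring m x = 1} = m ^ 2 / 4 := by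
    rw [TwoSubset.card_filter_sum_eq_one]
    simp only [pathColoring_apply, ZMod.natCast_eq_zero_iff_even,
      ZMod.natCast_eq_one_iff_odd, card_filter_fin_even_odd, Nat.add_one_div_two_mul_div_two]
  refine indepNum_eq_of_forall_card_le _ hcard (fun A hA B hB hAB => ?_)
    fun s hs => hcard ▸ card_le_card_filter_pathColoring_sum_eq_one hs
  rw [mem_filter_univ] at hA hB
  exact tokenGraph_adj_sum_ne (pathColoring m) hAB (hA.trans hB.symm)

/-- For every integer `m ≥ 2`, the independence number of the double vertex graph of
the path `P_m` equals `⌊m²/4⌋`. -/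
theorem indepNum_doubleVertexGraph_path (m : ℕ) (hm : 2 ≤ m) :
    indepNum (doubleVertexGraph (pathG m)) = m ^ 2 / 4 :=
  indepNum_doubleVertexGraph_path_general m
end

section
/- Let m ≥ 2 and let T_{m+1} denote the pair graph C(P_m) of the path P_m (isomorphic to the double vertex graph of P_{m+1}). For i ∈ {1,…,m}, let R_i = {{i,j} : j ∈ {1,…,m}} (2-multisets containing i). Then α(T_{m+1} − R_i) ≤ ⌊m²/4⌋ + 1 for every i. -/
open Finset

theorem Nat.eq_and_eq_of_mul_add_eq {a r r' x x' : ℕ} (hx : x < a) (hx' : x' < a)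
    (h : a * r + x = a * r' + x') : r = r' ∧ x = x' := by
  obtain ⟨hr, hx⟩ := (Nat.div_mod_unique (b := a) (by omega)).2 ⟨add_comm x (a * r), hx⟩
  obtain ⟨hr', hx'⟩ := (Nat.div_mod_unique (b := a) (by omega)).2 ⟨add_comm x' (a * r'), hx'⟩
  rw [h] at hr hx
  exact ⟨hr.symm.trans hr', hx.symm.trans hx'⟩

theorem sq_succ_div_four_add_half_lt {u v : ℕ} (h : u < v) :
    (u + 1) ^ 2 / 4 + u / 2 < (v + 1) ^ 2 / 4 := by
  have hstep : (u + 1) ^ 2 / 4 + u / 2 + 1 = (u + 2) ^ 2 / 4 := by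
    rcases Nat.even_or_odd' u with ⟨k, rfl | rfl⟩
    · have h1 : (2 * k + 1) ^ 2 = 4 * (k * k + k) + 1 := by ring
      have h2 : (2 * k + 2) ^ 2 = 4 * (k * k + 2 * k + 1) := by ring
      omega
    · have h1 : (2 * k + 1 + 1) ^ 2 = 4 * (k * k + 2 * k + 1) := by ring
      have h2 : (2 * k + 1 + 2) ^ 2 = 4 * (k * k + 3 * k + 2) + 1 := by ring
      omega
  have hmono : (u + 2) ^ 2 / 4 ≤ (v + 1) ^ 2 / 4 :=
    Nat.div_le_div_right (Nat.pow_le_pow_left (by omega) 2)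
  omega

theorem sq_div_four_add_sq_div_four_add_half_le (u v : ℕ) :
    (u + 1) ^ 2 / 4 + (v + 1) ^ 2 / 4 + (u * v + 1) / 2 ≤ (u + 1 + v) ^ 2 / 4 + 1 := by
  have : (u + 1) ^ 2 + (v + 1) ^ 2 + 2 * (u * v) = (u + 1 + v) ^ 2 + 1 := by ring
  omega

theorem indepNum_le_of_forall_card_le {V : Type*} {G : SimpleGraph V} {k : ℕ}
    (h : ∀ s : Finset V, G.IsIndepSet (s : Set V) → s.card ≤ k) : indepNum G ≤ k :=
  csSup_le ⟨0, ∅, by simp⟩ fun _ ⟨s, hs, hind⟩ =>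
    hs ▸ h s fun a ha b hb _ => hind a ha b hb

theorem SimpleGraph.IsIndepSet.card_le_of_eq_imp_adj {α : Type*} {G : SimpleGraph α}
    {s : Finset α} (hs : G.IsIndepSet (s : Set α)) (f : α → ℕ) {k : ℕ} (hlt : ∀ a ∈ s, f a < k)
    (hadj : ∀ a ∈ s, ∀ b ∈ s, a ≠ b → f a = f b → G.Adj a b) : s.card ≤ k := by
  simpa using card_le_card_of_injOn (t := range k) f (fun a ha => mem_range.2 (hlt a ha))
    fun a ha b hb hab => by_contra fun hne => hs ha hb hne (hadj a ha b hb hne hab)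

theorem SimpleGraph.IsIndepSet.map_subtype {V : Type*} {G : SimpleGraph V} {p : Set V}
    {s : Finset p} (hs : (G.induce p).IsIndepSet ↑s) :
    G.IsIndepSet ↑(s.map (Function.Embedding.subtype _)) := by
  rintro _ hu' _ hv' hne
  obtain ⟨u, hu, rfl⟩ := mem_map.1 hu'
  obtain ⟨v, hv, rfl⟩ := mem_map.1 hv'
  exact hs hu hv (fun h => hne (h ▸ rfl))

abbrev grid : SimpleGraph (ℕ × ℕ) := SimpleGraph.hasse ℕ □ SimpleGraph.hasse ℕ

theorem grid_adj {p q : ℕ × ℕ} :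
    grid.Adj p q ↔ (p.1 + 1 = q.1 ∨ q.1 + 1 = p.1) ∧ p.2 = q.2 ∨
      (p.2 + 1 = q.2 ∨ q.2 + 1 = p.2) ∧ p.1 = q.1 := by
  simp [SimpleGraph.boxProd_adj, SimpleGraph.hasse_adj, Nat.covBy_iff_add_one_eq]

theorem card_le_of_isIndepSet_grid_staircase {P : Finset (ℕ × ℕ)} (hP : grid.IsIndepSet ↑P)
    {c n : ℕ} (hreg : ∀ p ∈ P, c ≤ p.1 ∧ p.1 ≤ p.2 ∧ p.2 < c + n) :
    P.card ≤ (n + 1) ^ 2 / 4 := by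
  -- row `c + y` is cut into consecutive pairs, numbered after the `⌊(y + 1)² / 4⌋` pairs below it
  refine SimpleGraph.IsIndepSet.card_le_of_eq_imp_adj hP
    (fun p => (p.2 - c + 1) ^ 2 / 4 + (p.1 - c) / 2) (fun p hp => ?_)
    fun p hp q hq hpq hlabel => ?_
  · have := hreg p hp
    have := sq_succ_div_four_add_half_lt (show p.2 - c < n by omega)
    omega
  · have := hreg p hp
    have := hreg q hq
    have hrow : p.2 = q.2 := by
      by_contra hne
      rcases Nat.lt_or_gt_of_ne hne with h | h
      · have := sq_succ_div_four_add_half_lt (show p.2 - c < q.2 - c by omega)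
        omega
      · have := sq_succ_div_four_add_half_lt (show q.2 - c < p.2 - c by omega)
        omega
    have hcol : p.1 ≠ q.1 := fun h => hpq (Prod.ext h hrow)
    simp only [hrow] at hlabel
    rw [grid_adj]
    omega

theorem card_le_of_isIndepSet_grid_rectangle {P : Finset (ℕ × ℕ)} (hP : grid.IsIndepSet ↑P)
    {a b c : ℕ} (hreg : ∀ p ∈ P, p.1 < a ∧ c ≤ p.2 ∧ p.2 < c + b) :
    P.card ≤ (a * b + 1) / 2 := by
  -- rows `c + 2k, c + 2k + 1` are matched vertically; a last unpaired row, horizontally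
  let label : ℕ × ℕ → ℕ := fun p =>
    if (p.2 - c) / 2 < b / 2 then a * ((p.2 - c) / 2) + p.1 else a * (b / 2) + p.1 / 2
  have hb : a * b = 2 * (a * (b / 2)) + a * (b % 2) := by
    rw [← mul_assoc, mul_comm 2 a, mul_assoc, ← mul_add, Nat.div_add_mod]
  have hpaired : ∀ p ∈ P, (p.2 - c) / 2 < b / 2 → label p < a * (b / 2) := by
    intro p hp hlt
    have := hreg p hp
    have := Nat.mul_le_mul_left a (show (p.2 - c) / 2 + 1 ≤ b / 2 by omega)
    simp only [label, if_pos hlt, mul_add_one] at this ⊢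
    omega
  have hlast : ∀ p ∈ P, ¬(p.2 - c) / 2 < b / 2 → b % 2 = 1 ∧ p.2 = c + b - 1 ∧
      label p = a * (b / 2) + p.1 / 2 := by
    intro p hp hlt
    have := hreg p hp
    exact ⟨by omega, by omega, if_neg hlt⟩
  refine SimpleGraph.IsIndepSet.card_le_of_eq_imp_adj hP label (fun p hp => ?_)
    fun p hp q hq hpq hlabel => ?_
  · have := hreg p hp
    by_cases hrow : (p.2 - c) / 2 < b / 2
    · have := hpaired p hp hrow
      omega
    · obtain ⟨hodd, -, hp'⟩ := hlast p hp hrow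
      rw [hodd, mul_one] at hb
      omega
  · have := hreg p hp
    have := hreg q hq
    rw [grid_adj]
    by_cases hprow : (p.2 - c) / 2 < b / 2 <;> by_cases hqrow : (q.2 - c) / 2 < b / 2
    · simp only [label, if_pos hprow, if_pos hqrow] at hlabel
      obtain ⟨hpair, hcol⟩ := Nat.eq_and_eq_of_mul_add_eq (hreg p hp).1 (hreg q hq).1 hlabel
      have hrow : p.2 ≠ q.2 := fun h => hpq (Prod.ext hcol h)
      omega
    · have := hpaired p hp hprow
      have := hlast q hq hqrow
      omega
    · have := hpaired q hq hqrow
      have := hlast p hp hprow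
      omega
    · obtain ⟨-, hp2, hp'⟩ := hlast p hp hprow
      obtain ⟨-, hq2, hq'⟩ := hlast q hq hqrow
      have hcol : p.1 ≠ q.1 := fun h => hpq (Prod.ext h (by omega))
      omega

theorem card_le_of_isIndepSet_grid_staircase_avoid {P : Finset (ℕ × ℕ)}
    (hP : grid.IsIndepSet ↑P) {m i : ℕ} (hi : i < m)
    (hreg : ∀ p ∈ P, p.1 ≤ p.2 ∧ p.2 < m ∧ p.1 ≠ i ∧ p.2 ≠ i) :
    P.card ≤ m ^ 2 / 4 + 1 := by
  obtain ⟨v, rfl⟩ : ∃ v, m = i + 1 + v := ⟨m - (i + 1), by omega⟩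
  have hsub (q : ℕ × ℕ → Prop) [DecidablePred q] : grid.IsIndepSet ↑(P.filter q) :=
    hP.mono (coe_subset.2 (filter_subset q P))
  have hlow := card_le_of_isIndepSet_grid_staircase (hsub (·.2 < i)) (c := 0) (n := i)
    fun p hp => by obtain ⟨hp, hq⟩ := mem_filter.1 hp; have := hreg p hp; omega
  have hmid := card_le_of_isIndepSet_grid_rectangle (hsub fun p => p.1 < i ∧ i < p.2)
    (a := i) (c := i + 1) (b := v)
    fun p hp => by obtain ⟨hp, hq⟩ := mem_filter.1 hp; have := hreg p hp; omega
  have hhigh := card_le_of_isIndepSet_grid_staircase (hsub (i < ·.1)) (c := i + 1) (n := v)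
    fun p hp => by obtain ⟨hp, hq⟩ := mem_filter.1 hp; have := hreg p hp; omega
  have hcover : P ⊆ P.filter (·.2 < i) ∪ P.filter (fun p => p.1 < i ∧ i < p.2) ∪
      P.filter (i < ·.1) := by
    intro p hp
    have := hreg p hp
    simp only [mem_union, mem_filter, hp, true_and]
    omega
  calc P.card ≤ _ := card_le_card hcover
    _ ≤ _ := card_union_le _ _
    _ ≤ (i + 1) ^ 2 / 4 + (i * v + 1) / 2 + (v + 1) ^ 2 / 4 := by
      gcongr
      exact (card_union_le _ _).trans (by gcongr)
    _ ≤ (i + 1 + v) ^ 2 / 4 + 1 := by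
      have := sq_div_four_add_sq_div_four_add_half_le i v
      omega

theorem pairGraph_adj_mk_mk {V : Type*} {G : SimpleGraph V} {a x y : V} (h : G.Adj x y) :
    (pairGraph G).Adj s(a, x) s(a, y) := by
  simp only [pairGraph, SimpleGraph.fromRel_adj]
  exact ⟨fun he => h.ne (Sym2.congr_right.1 he), Or.inl ⟨a, x, y, h, rfl, rfl⟩⟩

theorem pathG_adj_iff {m : ℕ} {x y : Fin m} :
    (pathG m).Adj x y ↔ (x : ℕ) + 1 = y ∨ (y : ℕ) + 1 = x := by
  simp only [pathG, SimpleGraph.fromRel_adj, ne_eq, and_iff_right_iff_imp]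
  rintro h rfl
  omega

theorem pairGraph_pathG_adj_of_grid_adj {m : ℕ} {x y x' y' : Fin m}
    (h : grid.Adj ((x : ℕ), (y : ℕ)) ((x' : ℕ), (y' : ℕ))) :
    (pairGraph (pathG m)).Adj s(x, y) s(x', y') := by
  rcases grid_adj.1 h with ⟨hx, hy⟩ | ⟨hy, hx⟩
  · rw [Fin.ext hy, Sym2.eq_swap, Sym2.eq_swap (a := x')]
    exact pairGraph_adj_mk_mk (pathG_adj_iff.2 hx)
  · rw [Fin.ext hx]
    exact pairGraph_adj_mk_mk (pathG_adj_iff.2 hy)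

theorem Sym2.mk_inf_sup {α : Type*} [LinearOrder α] (s : Sym2 α) : s(s.inf, s.sup) = s :=
  Sym2.sortEquiv.symm_apply_apply s

def sortedVal {m : ℕ} (s : Sym2 (Fin m)) : ℕ × ℕ := (s.inf, s.sup)

theorem sortedVal_injective {m : ℕ} : Function.Injective (sortedVal (m := m)) := by
  intro s t h
  simp only [sortedVal, Prod.mk.injEq, Fin.val_inj] at h
  exact Sym2.inf_eq_inf_and_sup_eq_sup.1 h

theorem sortedVal_mem_staircase {m : ℕ} {s : Sym2 (Fin m)} {i : Fin m} (hi : i ∉ s) :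
    (sortedVal s).1 ≤ (sortedVal s).2 ∧ (sortedVal s).2 < m ∧
      (sortedVal s).1 ≠ i ∧ (sortedVal s).2 ≠ i := by
  rw [← Sym2.mk_inf_sup s, Sym2.mem_iff, not_or] at hi
  exact ⟨Sym2.inf_le_sup s, (s.sup).isLt, fun h => hi.1 (Fin.ext h).symm,
    fun h => hi.2 (Fin.ext h).symm⟩

theorem isIndepSet_image_sortedVal {m : ℕ} {S : Finset (Sym2 (Fin m))}
    (hS : (pairGraph (pathG m)).IsIndepSet ↑S) : grid.IsIndepSet ↑(S.image sortedVal) := by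
  rintro _ hp _ hq hne hadj
  obtain ⟨s, hs, rfl⟩ := mem_image.1 hp
  obtain ⟨t, ht, rfl⟩ := mem_image.1 hq
  refine hS hs ht (fun h => hne (h ▸ rfl)) ?_
  rw [← Sym2.mk_inf_sup s, ← Sym2.mk_inf_sup t]
  exact pairGraph_pathG_adj_of_grid_adj hadj

theorem indepNum_pairGraph_path_delete_Ri_general (m : ℕ) (i : Fin m) :
    indepNum (SimpleGraph.induce {s : Sym2 (Fin m) | i ∉ s} (pairGraph (pathG m))) ≤
      m ^ 2 / 4 + 1 := by
  refine indepNum_le_of_forall_card_le fun s hs => ?_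
  let S := s.map (Function.Embedding.subtype _)
  have hreg : ∀ p ∈ S.image sortedVal, p.1 ≤ p.2 ∧ p.2 < m ∧ p.1 ≠ i ∧ p.2 ≠ i := by
    intro p hp
    obtain ⟨_, hu, rfl⟩ := mem_image.1 hp
    obtain ⟨u, -, rfl⟩ := mem_map.1 hu
    exact sortedVal_mem_staircase u.2
  calc s.card = (S.image sortedVal).card := by
        rw [card_image_of_injective _ sortedVal_injective, card_map]
    _ ≤ m ^ 2 / 4 + 1 :=
        card_le_of_isIndepSet_grid_staircase_avoid (isIndepSet_image_sortedVal hs.map_subtype)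
          i.isLt hreg

/-- For `m ≥ 2` and every `i ∈ {1,…,m}`, deleting from the pair graph `C(P_m)` all
2-multisets containing `i` yields a graph of independence number at most `⌊m²/4⌋ + 1`. -/
theorem indepNum_pairGraph_path_delete_Ri (m : ℕ) (hm : 2 ≤ m) (i : Fin m) :
    indepNum (SimpleGraph.induce {s : Sym2 (Fin m) | i ∉ s} (pairGraph (pathG m))) ≤
      m ^ 2 / 4 + 1 :=
  indepNum_pairGraph_path_delete_Ri_general m i
end
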